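/- arXiv:1207.4031 — 7 statements merged into one kernel-verified Lean document; each statement's English description precedes it below -/
import Mathlib

section
/- Let θ ∈ [0,1) and let (ξ_p)_{p≥0} be i.i.d. real random variables with E exp(α ξ_0²) < ∞ for some α > 0, and set X = Σ_{p=0}^∞ θ^p ξ_{−p}. Then E exp( α (1−θ)² X² ) ≤ E exp( α ξ_0² ). -/
/-!
With the weights `(1 - θ) θ ^ p` of the geometric distribution with parameter `1 - θ`, the
variable `(1 - θ) X` is the mixture `∑ p, (1 - θ) θ ^ p ξ (-p)` of the `ξ (-p)`. Jensen's
inequality for the convex function `t ↦ exp (α t²)` bounds `exp (α (1 - θ)² X²)` pointwise by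
`∑ p, (1 - θ) θ ^ p exp (α ξ (-p)²)`; integrating term by term (Tonelli) and using that every
`ξ (-p)` has the law of `ξ 0` turns the right-hand side into `E exp (α ξ 0²)`.
-/

open MeasureTheory ProbabilityTheory Filter Real Set

lemma convexOn_exp_mul_sq {c : ℝ} (hc : 0 ≤ c) :
    ConvexOn ℝ univ fun t : ℝ => exp (c * t ^ 2) := by
  have hsq : ConvexOn ℝ univ fun t : ℝ => c * t ^ 2 := even_two.convexOn_pow.smul hc
  have himage : Convex ℝ ((fun t : ℝ => c * t ^ 2) '' univ) :=
    Real.convex_iff_isPreconnected.2 (isPreconnected_univ.image _ (by fun_prop))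
  exact (convexOn_exp.subset (subset_univ _) himage).comp hsq (exp_monotone.monotoneOn _)

lemma abs_le_one_add_exp_mul_sq_div {α : ℝ} (hα : 0 < α) (t : ℝ) :
    |t| ≤ 1 + exp (α * t ^ 2) / α := by
  have habs : |t| ≤ 1 + t ^ 2 := by nlinarith [sq_abs t, sq_nonneg (|t| - 1)]
  have hsq : t ^ 2 ≤ exp (α * t ^ 2) / α := by
    rw [le_div_iff₀ hα]
    nlinarith [add_one_le_exp (α * t ^ 2)]
  linarith

section Jensen

variable {ι : Type*} [MeasurableSpace ι] {ν : Measure ι} {α : ℝ} {x : ι → ℝ}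

lemma MeasureTheory.Integrable.of_exp_mul_sq [IsFiniteMeasure ν] (hα : 0 < α)
    (hx : AEStronglyMeasurable x ν) (h : Integrable (fun i => exp (α * x i ^ 2)) ν) :
    Integrable x ν :=
  ((integrable_const 1).add (h.div_const α)).mono' hx
    (Eventually.of_forall fun i => abs_le_one_add_exp_mul_sq_div hα (x i))

lemma ofReal_exp_mul_sq_integral_le_lintegral [IsProbabilityMeasure ν] (hα : 0 < α)
    (hx : AEStronglyMeasurable x ν) :
    ENNReal.ofReal (exp (α * (∫ i, x i ∂ν) ^ 2)) ≤
      ∫⁻ i, ENNReal.ofReal (exp (α * x i ^ 2)) ∂ν := by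
  have hpos : 0 ≤ᵐ[ν] fun i => exp (α * x i ^ 2) := Eventually.of_forall fun _ => (exp_pos _).le
  by_cases hint : Integrable (fun i => exp (α * x i ^ 2)) ν
  · rw [← ofReal_integral_eq_lintegral_ofReal hint hpos]
    exact ENNReal.ofReal_le_ofReal <| (convexOn_exp_mul_sq hα.le).map_integral_le
      (by fun_prop) isClosed_univ (Eventually.of_forall fun _ => mem_univ _)
      (hint.of_exp_mul_sq hα hx) hint
  · have hinf : ¬ HasFiniteIntegral (fun i => exp (α * x i ^ 2)) ν :=
      fun h => hint ⟨by fun_prop, h⟩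
    rw [hasFiniteIntegral_iff_ofReal hpos, not_lt, top_le_iff] at hinf
    simp [hinf]

end Jensen

lemma integral_exp_mul_sq_integral_le {Ω ι : Type*} [MeasurableSpace Ω] [MeasurableSpace ι]
    {μ : Measure Ω} [IsProbabilityMeasure μ] {ν : Measure ι} [IsProbabilityMeasure ν]
    {α : ℝ} (hα : 0 < α) {ξ : ι → Ω → ℝ} {Z : Ω → ℝ}
    (hξ : Measurable fun q : Ω × ι => ξ q.2 q.1) (hident : ∀ i, IdentDistrib (ξ i) Z μ μ)
    (hZ : Integrable (fun ω => exp (α * Z ω ^ 2)) μ) :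
    ∫ ω, exp (α * (∫ i, ξ i ω ∂ν) ^ 2) ∂μ ≤ ∫ ω, exp (α * Z ω ^ 2) ∂μ := by
  set φ : ℝ → ENNReal := fun t => ENNReal.ofReal (exp (α * t ^ 2))
  have hφ : Measurable φ := by fun_prop
  have hmix : Measurable fun ω => ∫ i, ξ i ω ∂ν :=
    (hξ.stronglyMeasurable.integral_prod_right' (ν := ν)).measurable
  have hlintegral : ∫⁻ ω, φ (∫ i, ξ i ω ∂ν) ∂μ ≤ ∫⁻ ω, φ (Z ω) ∂μ := calc
    _ ≤ ∫⁻ ω, ∫⁻ i, φ (ξ i ω) ∂ν ∂μ := lintegral_mono fun ω =>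
        ofReal_exp_mul_sq_integral_le_lintegral hα
          (hξ.comp measurable_prodMk_left).aestronglyMeasurable
    _ = ∫⁻ i, ∫⁻ ω, φ (ξ i ω) ∂μ ∂ν := lintegral_lintegral_swap (hφ.comp hξ).aemeasurable
    _ = ∫⁻ _, ∫⁻ ω, φ (Z ω) ∂μ ∂ν := lintegral_congr fun i => ((hident i).comp hφ).lintegral_eq
    _ = ∫⁻ ω, φ (Z ω) ∂μ := by rw [lintegral_const, measure_univ, mul_one]
  have hpos : ∀ {f : Ω → ℝ}, 0 ≤ᵐ[μ] fun ω => exp (α * f ω ^ 2) :=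
    Eventually.of_forall fun _ => (exp_pos _).le
  rw [integral_eq_lintegral_of_nonneg_ae hpos
      (hmix.pow_const 2 |>.const_mul α |>.exp).aestronglyMeasurable,
    integral_eq_lintegral_of_nonneg_ae hpos hZ.1]
  exact ENNReal.toReal_mono hZ.lintegral_lt_top.ne hlintegral

theorem exp_moment_bound_stationary_solution_general
    {Ω : Type*} [MeasureSpace Ω] [IsProbabilityMeasure (ℙ : Measure Ω)]
    (ξ : ℤ → Ω → ℝ)
    (hmeas : ∀ k, Measurable (ξ k))
    (hident : ∀ k, IdentDistrib (ξ k) (ξ 0) ℙ ℙ)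
    (α : ℝ) (hα : 0 < α)
    (hgauss : Integrable (fun ω => Real.exp (α * (ξ 0 ω) ^ 2)) ℙ)
    (θ : ℝ) (hθ : θ ∈ Set.Ico (0 : ℝ) 1)
    (X : Ω → ℝ)
    (hX : ∀ ω, X ω = ∑' p : ℕ, θ ^ p * ξ (-(p : ℤ)) ω) :
    𝔼[fun ω => Real.exp (α * (1 - θ) ^ 2 * (X ω) ^ 2)] ≤
      𝔼[fun ω => Real.exp (α * (ξ 0 ω) ^ 2)] := by
  obtain ⟨hθ0, hθ1⟩ := hθ
  set q : unitInterval := ⟨1 - θ, by linarith, by linarith⟩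
  have hq : q ≠ 0 := fun h => by
    have : 1 - θ = 0 := congrArg Subtype.val h
    linarith
  -- No summability is needed: both sides are the junk value `0` when the series diverges.
  have hmix : ∀ ω, (1 - θ) * X ω = ∫ n, ξ (-(n : ℤ)) ω ∂geometricMeasure q := by
    intro ω
    rw [integral_geometricMeasure hq, hX, ← tsum_mul_left]
    congr with n
    simp only [sub_sub_cancel, smul_eq_mul, q]
    ring
  calc 𝔼[fun ω => exp (α * (1 - θ) ^ 2 * (X ω) ^ 2)]
      = ∫ ω, exp (α * (∫ n, ξ (-(n : ℤ)) ω ∂geometricMeasure q) ^ 2) := by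
        simp_rw [← hmix, mul_pow, mul_assoc]
    _ ≤ 𝔼[fun ω => exp (α * (ξ 0 ω) ^ 2)] := integral_exp_mul_sq_integral_le hα
        (measurable_from_prod_countable_left fun n => hmeas (-(n : ℤ))) (fun n => hident _) hgauss

theorem exp_moment_bound_stationary_solution
    {Ω : Type*} [MeasureSpace Ω] [IsProbabilityMeasure (ℙ : Measure Ω)]
    (ξ : ℤ → Ω → ℝ)
    (hmeas : ∀ k, Measurable (ξ k))
    (hindep : iIndepFun ξ ℙ)
    (hident : ∀ k, IdentDistrib (ξ k) (ξ 0) ℙ ℙ)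
    (α : ℝ) (hα : 0 < α)
    (hgauss : Integrable (fun ω => Real.exp (α * (ξ 0 ω) ^ 2)) ℙ)
    (θ : ℝ) (hθ : θ ∈ Set.Ico (0 : ℝ) 1)
    (X : Ω → ℝ)
    (hX : ∀ ω, X ω = ∑' p : ℕ, θ ^ p * ξ (-(p : ℤ)) ω) :
    𝔼[fun ω => Real.exp (α * (1 - θ) ^ 2 * (X ω) ^ 2)] ≤
      𝔼[fun ω => Real.exp (α * (ξ 0 ω) ^ 2)] :=
  exp_moment_bound_stationary_solution_general ξ hmeas hident α hα hgauss θ hθ X hX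
end

section
/- For 1 ≤ l ≤ M and integers k > i ≥ 1, E(U_{k,l,m,n} U_{i,l,m,n}) = θ_n^{2l} (E ξ_0²)² · ( 1_{A₁} + 1_{A₂} Σ_{q=0}^{m−1−2l} θ_n^{2q} ), where A₁ denotes the condition i + l > k and A₂ the condition i + l = k (the indicators are 1 if the condition holds and 0 otherwise). -/
/-!
Write `U_{r,l} = S_r - 𝔼 S_r`, where `S_r` is a weighted sum of products `ξ_a ξ_b`, so that
`𝔼(U_k U_i) = cov(S_k, S_i)`. For independent centred `ξ` with common variance `σ²`,
`cov(ξ_a ξ_b, ξ_c ξ_d) = σ⁴ (1[a = c, b = d] + 1[a = d, b = c])` unless all four indices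
coincide, so `cov(S_k, S_i)` is `σ⁴` times the weighted count of products shared by `S_k` and
`S_i`. For `i < k` the shared products are `ξ_k ξ_i` (weight `θ^{2l}`) when `k ≤ i + l`, and,
when `k = i + l`, also `ξ_k ξ_{i-q}` for `1 ≤ q ≤ m - 1 - 2l` (weight `θ^{2l+2q}`).
-/

open MeasureTheory ProbabilityTheory Finset
open scoped ENNReal

instance : ENNReal.HolderTriple 4 4 2 :=
  ⟨by rw [← two_mul, show (4 : ℝ≥0∞) = 2 * 2 by norm_num, ENNReal.mul_inv (by simp) (by simp),
    ← mul_assoc, ENNReal.mul_inv_cancel (by simp) (by simp), one_mul]⟩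

section Products

variable {Ω : Type*} {mΩ : MeasurableSpace Ω} {μ : Measure Ω} {ξ : ℤ → Ω → ℝ} {v : ℝ}

lemma memLp_two_mul (hL4 : ∀ a, MemLp (ξ a) 4 μ) (a b : ℤ) :
    MemLp (fun ω => ξ a ω * ξ b ω) 2 μ :=
  (hL4 b).mul' (hL4 a)

lemma memLp_two_sum_mul (hL4 : ∀ a, MemLp (ξ a) 4 μ) {ι : Type*} (s : Finset ι) (w : ι → ℝ)
    (f g : ι → ℤ) : MemLp (fun ω => ∑ j ∈ s, w j * (ξ (f j) ω * ξ (g j) ω)) 2 μ :=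
  memLp_finsetSum s fun j _ => (memLp_two_mul hL4 (f j) (g j)).const_mul (w j)

namespace ProbabilityTheory.iIndepFun

lemma integral_mul_mul_mul_eq_zero (hindep : iIndepFun ξ μ)
    (hmeas : ∀ a, AEStronglyMeasurable (ξ a) μ) (hmean : ∀ a, ∫ ω, ξ a ω ∂μ = 0)
    {a b c d : ℤ} (hab : a ≠ b) (hac : a ≠ c) (had : a ≠ d) :
    ∫ ω, ξ a ω * ξ b ω * ξ c ω * ξ d ω ∂μ = 0 := by
  classical
  have hind : IndepFun (ξ a) (fun ω => ξ b ω * ξ c ω * ξ d ω) μ :=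
    (hindep.indepFun_finset₀ {a} {b, c, d} (by simp [hab, hac, had])
      fun j => (hmeas j).aemeasurable).comp
      (φ := fun x : ({a} : Finset ℤ) → ℝ => x ⟨a, by simp⟩)
      (ψ := fun x : ({b, c, d} : Finset ℤ) → ℝ =>
        x ⟨b, by simp⟩ * x ⟨c, by simp⟩ * x ⟨d, by simp⟩)
      (measurable_pi_apply _) (by fun_prop)
  calc _ = ∫ ω, ξ a ω * (ξ b ω * ξ c ω * ξ d ω) ∂μ := by simp only [mul_assoc]
    _ = 0 := by
      rw [hind.integral_fun_mul_eq_mul_integral (hmeas a)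
        (((hmeas b).mul (hmeas c)).mul (hmeas d)), hmean, zero_mul]

lemma integral_mul_eq_ite (hindep : iIndepFun ξ μ)
    (hmeas : ∀ a, AEStronglyMeasurable (ξ a) μ) (hmean : ∀ a, ∫ ω, ξ a ω ∂μ = 0)
    (hvar : ∀ a, ∫ ω, ξ a ω ^ 2 ∂μ = v) (a b : ℤ) :
    ∫ ω, ξ a ω * ξ b ω ∂μ = if a = b then v else 0 := by
  split_ifs with hab
  · simpa [hab, sq] using hvar b
  · rw [(hindep.indepFun hab).integral_fun_mul_eq_mul_integral (hmeas a) (hmeas b), hmean,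
      zero_mul]

lemma integral_sq_mul_sq (hindep : iIndepFun ξ μ)
    (hmeas : ∀ a, AEStronglyMeasurable (ξ a) μ) (hvar : ∀ a, ∫ ω, ξ a ω ^ 2 ∂μ = v)
    {a b : ℤ} (hab : a ≠ b) :
    ∫ ω, ξ a ω ^ 2 * ξ b ω ^ 2 ∂μ = v ^ 2 := by
  have hind : IndepFun (fun ω => ξ a ω ^ 2) (fun ω => ξ b ω ^ 2) μ :=
    (hindep.indepFun hab).comp (measurable_id.pow_const 2) (measurable_id.pow_const 2)
  rw [hind.integral_fun_mul_eq_mul_integral ((hmeas a).pow 2) ((hmeas b).pow 2), hvar, hvar, sq]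

lemma integral_mul_mul_mul_eq_ite (hindep : iIndepFun ξ μ)
    (hmeas : ∀ a, AEStronglyMeasurable (ξ a) μ) (hmean : ∀ a, ∫ ω, ξ a ω ∂μ = 0)
    (hvar : ∀ a, ∫ ω, ξ a ω ^ 2 ∂μ = v) {a b c d : ℤ} (h : ¬(a = b ∧ b = c ∧ c = d)) :
    ∫ ω, ξ a ω * ξ b ω * ξ c ω * ξ d ω ∂μ =
      v ^ 2 * ((if a = b ∧ c = d then 1 else 0) + (if a = c ∧ b = d then 1 else 0) +
        (if a = d ∧ b = c then 1 else 0)) := by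
  have isolated : ∀ {a b c d : ℤ}, a ≠ b → a ≠ c → a ≠ d →
      ∫ ω, ξ a ω * ξ b ω * ξ c ω * ξ d ω ∂μ = 0 :=
    hindep.integral_mul_mul_mul_eq_zero hmeas hmean
  have pair : ∀ {a b : ℤ}, a ≠ b → ∫ ω, ξ a ω ^ 2 * ξ b ω ^ 2 ∂μ = v ^ 2 :=
    hindep.integral_sq_mul_sq hmeas hvar
  by_cases ha : a ≠ b ∧ a ≠ c ∧ a ≠ d
  · rw [isolated ha.1 ha.2.1 ha.2.2]
    simp [ha.1, ha.2.1, ha.2.2]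
  by_cases hb : b ≠ a ∧ b ≠ c ∧ b ≠ d
  · calc _ = ∫ ω, ξ b ω * ξ a ω * ξ c ω * ξ d ω ∂μ := by simp only [mul_comm (ξ a _)]
      _ = _ := by rw [isolated hb.1 hb.2.1 hb.2.2]; simp [hb.1.symm, hb.2.1, hb.2.2]
  by_cases hc : c ≠ a ∧ c ≠ b ∧ c ≠ d
  · calc _ = ∫ ω, ξ c ω * ξ a ω * ξ b ω * ξ d ω ∂μ := by congr 1; ext; ring
      _ = _ := by rw [isolated hc.1 hc.2.1 hc.2.2]; simp [hc.1.symm, hc.2.1.symm, hc.2.2]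
  by_cases hd : d ≠ a ∧ d ≠ b ∧ d ≠ c
  · calc _ = ∫ ω, ξ d ω * ξ a ω * ξ b ω * ξ c ω ∂μ := by congr 1; ext; ring
      _ = _ := by rw [isolated hd.1 hd.2.1 hd.2.2]; simp [hd.1.symm, hd.2.1.symm, hd.2.2.symm]
  obtain ⟨rfl, rfl, hac⟩ | ⟨rfl, rfl, hab⟩ | ⟨rfl, rfl, hab⟩ :
      (a = b ∧ c = d ∧ a ≠ c) ∨ (a = c ∧ b = d ∧ a ≠ b) ∨ (a = d ∧ b = c ∧ a ≠ b) := by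
    omega
  · calc _ = ∫ ω, ξ a ω ^ 2 * ξ c ω ^ 2 ∂μ := by congr 1; ext; ring
      _ = _ := by rw [pair hac]; simp [hac]
  · calc _ = ∫ ω, ξ a ω ^ 2 * ξ b ω ^ 2 ∂μ := by congr 1; ext; ring
      _ = _ := by rw [pair hab]; simp [hab]
  · calc _ = ∫ ω, ξ a ω ^ 2 * ξ b ω ^ 2 ∂μ := by congr 1; ext; ring
      _ = _ := by rw [pair hab]; simp [hab]

lemma covariance_mul_mul [IsProbabilityMeasure μ] (hindep : iIndepFun ξ μ)
    (hL4 : ∀ a, MemLp (ξ a) 4 μ) (hmean : ∀ a, ∫ ω, ξ a ω ∂μ = 0)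
    (hvar : ∀ a, ∫ ω, ξ a ω ^ 2 ∂μ = v) {a b c d : ℤ} (h : ¬(a = b ∧ b = c ∧ c = d)) :
    cov[fun ω => ξ a ω * ξ b ω, fun ω => ξ c ω * ξ d ω; μ] =
      v ^ 2 * ((if a = c ∧ b = d then 1 else 0) + (if a = d ∧ b = c then 1 else 0)) := by
  have hmeas a := (hL4 a).aestronglyMeasurable
  rw [covariance_eq_sub (memLp_two_mul hL4 a b) (memLp_two_mul hL4 c d)]
  simp only [Pi.mul_apply, ← mul_assoc]
  rw [hindep.integral_mul_mul_mul_eq_ite hmeas hmean hvar h,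
    hindep.integral_mul_eq_ite hmeas hmean hvar, hindep.integral_mul_eq_ite hmeas hmean hvar]
  by_cases hab : a = b <;> by_cases hcd : c = d <;> simp [hab, hcd]
  ring

lemma integral_sum_mul [IsFiniteMeasure μ] (hindep : iIndepFun ξ μ)
    (hL4 : ∀ a, MemLp (ξ a) 4 μ) (hmean : ∀ a, ∫ ω, ξ a ω ∂μ = 0)
    (hvar : ∀ a, ∫ ω, ξ a ω ^ 2 ∂μ = v) {ι : Type*} (s : Finset ι) (w : ι → ℝ) (f g : ι → ℤ) :
    ∫ ω, ∑ j ∈ s, w j * (ξ (f j) ω * ξ (g j) ω) ∂μ =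
      ∑ j ∈ s, w j * if f j = g j then v else 0 := by
  rw [integral_finsetSum s fun j _ =>
    ((memLp_two_mul hL4 (f j) (g j)).integrable one_le_two).const_mul (w j)]
  simp only [integral_const_mul,
    hindep.integral_mul_eq_ite (fun a => (hL4 a).aestronglyMeasurable) hmean hvar]

lemma covariance_sum_mul_sum [IsProbabilityMeasure μ] (hindep : iIndepFun ξ μ)
    (hL4 : ∀ a, MemLp (ξ a) 4 μ) (hmean : ∀ a, ∫ ω, ξ a ω ∂μ = 0)
    (hvar : ∀ a, ∫ ω, ξ a ω ^ 2 ∂μ = v) {ι κ : Type*} (s : Finset ι) (t : Finset κ)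
    (w : ι → ℝ) (w' : κ → ℝ) (f g : ι → ℤ) (f' g' : κ → ℤ)
    (hdiag : ∀ j ∈ s, ∀ j' ∈ t, ¬(f j = g j ∧ g j = f' j' ∧ f' j' = g' j')) :
    cov[fun ω => ∑ j ∈ s, w j * (ξ (f j) ω * ξ (g j) ω),
        fun ω => ∑ j' ∈ t, w' j' * (ξ (f' j') ω * ξ (g' j') ω); μ] =
      v ^ 2 * ∑ j ∈ s, ∑ j' ∈ t, w j * w' j' *
        ((if f j = f' j' ∧ g j = g' j' then 1 else 0) +
          (if f j = g' j' ∧ g j = f' j' then 1 else 0)) := by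
  rw [covariance_fun_sum_fun_sum' (fun j _ => (memLp_two_mul hL4 (f j) (g j)).const_mul (w j))
    (fun j' _ => (memLp_two_mul hL4 (f' j') (g' j')).const_mul (w' j')), mul_sum]
  refine sum_congr rfl fun j hj => ?_
  rw [mul_sum]
  refine sum_congr rfl fun j' hj' => ?_
  rw [covariance_const_mul_left, covariance_const_mul_right,
    hindep.covariance_mul_mul hL4 hmean hvar (hdiag j hj j' hj')]
  ring

end ProbabilityTheory.iIndepFun

end Products

section LagSums

variable {Ω : Type*} {mΩ : MeasurableSpace Ω} {μ : Measure Ω} {ξ : ℤ → Ω → ℝ} {v : ℝ}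

-- `U_{r,l} = anchorSum r - θ^l 𝔼 ξ₀²`; the term `ξ_{r+l} ξ_r` of `U_{r,l}` is the `j = 0` term
-- of `lowAnchorSum r`.
def lowAnchorSum (ξ : ℤ → Ω → ℝ) (θ : ℝ) (m l r : ℕ) : Ω → ℝ :=
  fun ω => ∑ j ∈ range m, θ ^ j * (ξ ((r : ℤ) + l - j) ω * ξ r ω)

def highAnchorSum (ξ : ℤ → Ω → ℝ) (θ : ℝ) (m l r : ℕ) : Ω → ℝ :=
  fun ω => ∑ j ∈ Icc 1 (m - 1), θ ^ j * (ξ ((r : ℤ) + l) ω * ξ ((r : ℤ) - j) ω)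

def anchorSum (ξ : ℤ → Ω → ℝ) (θ : ℝ) (m l r : ℕ) : Ω → ℝ :=
  lowAnchorSum ξ θ m l r + highAnchorSum ξ θ m l r

lemma anchorSum_apply (θ : ℝ) {m : ℕ} (hm : 0 < m) (l r : ℕ) (ω : Ω) :
    anchorSum ξ θ m l r ω =
      ∑ j ∈ Icc 1 (m - 1), θ ^ j * ξ ((r : ℤ) + l - j) ω * ξ (r : ℤ) ω +
      ∑ j ∈ Icc 1 (m - 1), θ ^ j * ξ ((r : ℤ) + l) ω * ξ ((r : ℤ) - j) ω +
      ξ ((r : ℤ) + l) ω * ξ (r : ℤ) ω := by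
  have hIcc : Icc 1 (m - 1) = Ico 1 m := by ext; simp; omega
  simp only [anchorSum, Pi.add_apply, lowAnchorSum, highAnchorSum, sum_range_eq_add_Ico _ hm,
    hIcc, mul_assoc, pow_zero, Nat.cast_zero, sub_zero, one_mul]
  ring

lemma memLp_lowAnchorSum (hL4 : ∀ a, MemLp (ξ a) 4 μ) (θ : ℝ) (m l r : ℕ) :
    MemLp (lowAnchorSum ξ θ m l r) 2 μ :=
  memLp_two_sum_mul hL4 _ _ _ _

lemma memLp_highAnchorSum (hL4 : ∀ a, MemLp (ξ a) 4 μ) (θ : ℝ) (m l r : ℕ) :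
    MemLp (highAnchorSum ξ θ m l r) 2 μ :=
  memLp_two_sum_mul hL4 _ _ _ _

variable [IsProbabilityMeasure μ] (hindep : iIndepFun ξ μ) (hL4 : ∀ a, MemLp (ξ a) 4 μ)
  (hmean : ∀ a, ∫ ω, ξ a ω ∂μ = 0) (hvar : ∀ a, ∫ ω, ξ a ω ^ 2 ∂μ = v) (θ : ℝ) {m l : ℕ}
include hindep hL4 hmean hvar

lemma integral_lowAnchorSum (hl : l < m) (r : ℕ) :
    ∫ ω, lowAnchorSum ξ θ m l r ω ∂μ = θ ^ l * v := by
  unfold lowAnchorSum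
  rw [hindep.integral_sum_mul hL4 hmean hvar, sum_eq_single_of_mem l (mem_range.2 hl)]
  · simp
  · intro j _ hj
    rw [if_neg (by omega), mul_zero]

lemma integral_highAnchorSum (r : ℕ) : ∫ ω, highAnchorSum ξ θ m l r ω ∂μ = 0 := by
  unfold highAnchorSum
  rw [hindep.integral_sum_mul hL4 hmean hvar]
  exact sum_eq_zero fun j hj => by rw [mem_Icc] at hj; rw [if_neg (by omega), mul_zero]

lemma integral_anchorSum (hl : l < m) (r : ℕ) :
    ∫ ω, anchorSum ξ θ m l r ω ∂μ = θ ^ l * v := by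
  rw [anchorSum, integral_add' ((memLp_lowAnchorSum hL4 θ m l r).integrable one_le_two)
    ((memLp_highAnchorSum hL4 θ m l r).integrable one_le_two),
    integral_lowAnchorSum hindep hL4 hmean hvar θ hl, integral_highAnchorSum hindep hL4 hmean hvar,
    add_zero]

lemma covariance_lowAnchorSum_lowAnchorSum (hlm : 2 * l < m) {i k : ℕ} (hik : i < k) :
    cov[lowAnchorSum ξ θ m l k, lowAnchorSum ξ θ m l i; μ] =
      v ^ 2 * if k ≤ i + l then θ ^ (2 * l) else 0 := by
  unfold lowAnchorSum
  rw [hindep.covariance_sum_mul_sum hL4 hmean hvar _ _ _ _ _ _ _ _ fun j _ j' _ => by omega,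
    ← sum_product']
  congr 1
  split_ifs with hkil
  · rw [sum_eq_single_of_mem (k + l - i, i + l - k) (by simp; omega)]
    · rw [if_neg (by omega), if_pos (by omega), ← pow_add,
        show k + l - i + (i + l - k) = 2 * l by omega]
      ring
    · rintro ⟨j, j'⟩ _ hne
      simp only [ne_eq, Prod.mk.injEq] at hne
      rw [if_neg (by omega), if_neg (by omega)]
      ring
  · exact sum_eq_zero fun p _ => by rw [if_neg (by omega), if_neg (by omega)]; ring

lemma covariance_lowAnchorSum_highAnchorSum {i k : ℕ} (hik : i < k) :
    cov[lowAnchorSum ξ θ m l k, highAnchorSum ξ θ m l i; μ] =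
      v ^ 2 * if i + l = k then θ ^ (2 * l) * ∑ q ∈ Ico 1 (m - 2 * l), θ ^ (2 * q) else 0 := by
  unfold lowAnchorSum highAnchorSum
  rw [hindep.covariance_sum_mul_sum hL4 hmean hvar _ _ _ _ _ _ _ _
    fun j _ j' hj' => by rw [mem_Icc] at hj'; omega]
  congr 1
  split_ifs with hkil
  · rw [sum_comm, mul_sum, ← sum_subset (s₁ := Ico 1 (m - 2 * l))
      (fun q hq => by simp only [mem_Ico, mem_Icc] at hq ⊢; omega)]
    · refine sum_congr rfl fun q hq => ?_
      rw [mem_Ico] at hq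
      rw [sum_eq_single_of_mem (2 * l + q) (mem_range.2 (by omega))]
      · rw [if_neg (by omega), if_pos (by omega)]
        ring
      · intro j _ hj
        rw [if_neg (by omega), if_neg (by omega)]
        ring
    · intro q hq hq'
      simp only [mem_Ico, mem_Icc] at hq hq'
      exact sum_eq_zero fun j hj => by
        rw [mem_range] at hj; rw [if_neg (by omega), if_neg (by omega)]; ring
  · exact sum_eq_zero fun j _ => sum_eq_zero fun j' _ => by
      rw [if_neg (by omega), if_neg (by omega)]; ring

lemma covariance_highAnchorSum_add_eq_zero {i k : ℕ} (hik : i < k) :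
    cov[highAnchorSum ξ θ m l k, lowAnchorSum ξ θ m l i + highAnchorSum ξ θ m l i; μ] = 0 := by
  have vanish : ∀ {κ : Type} (t : Finset κ) (w' : κ → ℝ) (f' g' : κ → ℤ),
      (∀ j' ∈ t, f' j' < k + l ∧ g' j' < k + l) →
      cov[highAnchorSum ξ θ m l k,
        fun ω => ∑ j' ∈ t, w' j' * (ξ (f' j') ω * ξ (g' j') ω); μ] = 0 := by
    intro κ t w' f' g' hlt
    unfold highAnchorSum
    rw [hindep.covariance_sum_mul_sum hL4 hmean hvar _ _ _ _ _ _ _ _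
      fun j hj j' _ => by rw [mem_Icc] at hj; omega]
    refine mul_eq_zero_of_right _ (sum_eq_zero fun j _ => sum_eq_zero fun j' hj' => ?_)
    have := hlt j' hj'
    rw [if_neg (by omega), if_neg (by omega)]
    ring
  have hlow : cov[highAnchorSum ξ θ m l k, lowAnchorSum ξ θ m l i; μ] = 0 :=
    vanish (range m) (θ ^ ·) (fun j => (i : ℤ) + l - j) (fun _ => i)
      fun j' hj' => by rw [mem_range] at hj'; omega
  have hhigh : cov[highAnchorSum ξ θ m l k, highAnchorSum ξ θ m l i; μ] = 0 :=
    vanish (Icc 1 (m - 1)) (θ ^ ·) (fun _ => (i : ℤ) + l) (fun j => (i : ℤ) - j)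
      fun j' hj' => by rw [mem_Icc] at hj'; omega
  rw [covariance_add_right (memLp_highAnchorSum hL4 θ m l k) (memLp_lowAnchorSum hL4 θ m l i)
    (memLp_highAnchorSum hL4 θ m l i), hlow, hhigh, add_zero]

lemma covariance_anchorSum (hlm : 2 * l < m) {i k : ℕ} (hik : i < k) :
    cov[anchorSum ξ θ m l k, anchorSum ξ θ m l i; μ] =
      θ ^ (2 * l) * v ^ 2 * ((if k < i + l then 1 else 0) +
        (if i + l = k then 1 else 0) * ∑ q ∈ range (m - 2 * l), θ ^ (2 * q)) := by
  have hlow r := memLp_lowAnchorSum hL4 θ m l r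
  have hhigh r := memLp_highAnchorSum hL4 θ m l r
  rw [anchorSum, anchorSum, covariance_add_left (hlow k) (hhigh k) ((hlow i).add (hhigh i)),
    covariance_add_right (hlow k) (hlow i) (hhigh i),
    covariance_lowAnchorSum_lowAnchorSum hindep hL4 hmean hvar θ hlm hik,
    covariance_lowAnchorSum_highAnchorSum hindep hL4 hmean hvar θ hik,
    covariance_highAnchorSum_add_eq_zero hindep hL4 hmean hvar θ hik, add_zero]
  rcases lt_trichotomy k (i + l) with h | rfl | h
  · simp only [if_pos h.le, if_pos h, if_neg h.ne']
    ring
  · simp only [le_refl, lt_irrefl, ↓reduceIte, range_eq_Ico,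
      sum_eq_sum_Ico_succ_bot (show 0 < m - 2 * l by omega), mul_zero, pow_zero, zero_add]
    ring
  · simp only [if_neg (show ¬k ≤ i + l by omega), if_neg (show ¬k < i + l by omega),
      if_neg h.ne]
    ring

end LagSums

theorem U_same_lag_covariance_general
    {Ω : Type*} [MeasureSpace Ω] [IsProbabilityMeasure (ℙ : Measure Ω)]
    (ξ : ℤ → Ω → ℝ)
    (hindep : iIndepFun ξ ℙ)
    (hident : ∀ k, IdentDistrib (ξ k) (ξ 0) ℙ ℙ)
    (hcentered : 𝔼[ξ 0] = 0)
    (hL4 : MemLp (ξ 0) 4 ℙ)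
    (θ : ℝ)
    (M m : ℕ) (hm : 2 * M < m)
    (U : ℕ → ℕ → Ω → ℝ)
    (hU : ∀ k l ω, U k l ω =
      ∑ j ∈ Finset.Icc 1 (m - 1), θ ^ j * ξ ((k : ℤ) + l - j) ω * ξ (k : ℤ) ω +
      ∑ j ∈ Finset.Icc 1 (m - 1), θ ^ j * ξ ((k : ℤ) + l) ω * ξ ((k : ℤ) - j) ω +
      ξ ((k : ℤ) + l) ω * ξ (k : ℤ) ω - θ ^ l * 𝔼[fun ω => (ξ 0 ω) ^ 2])
    (l : ℕ) (hlM : l ≤ M)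
    (i k : ℕ) (hik : i < k) :
    𝔼[fun ω => U k l ω * U i l ω] =
      θ ^ (2 * l) * (𝔼[fun ω => (ξ 0 ω) ^ 2]) ^ 2 *
        ((if k < i + l then (1 : ℝ) else 0) +
          (if i + l = k then (1 : ℝ) else 0) *
            ∑ q ∈ Finset.range (m - 2 * l), θ ^ (2 * q)) := by
  set v := 𝔼[fun ω => ξ 0 ω ^ 2]
  have hL4' : ∀ a, MemLp (ξ a) 4 ℙ := fun a => (hident a).symm.memLp_snd hL4
  have hmean : ∀ a, ∫ ω, ξ a ω = 0 := fun a => (hident a).integral_eq.trans hcentered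
  have hvar : ∀ a, ∫ ω, ξ a ω ^ 2 = v := fun a =>
    ((hident a).comp (measurable_id.pow_const 2)).integral_eq
  have hlm : 2 * l < m := by omega
  have hU' : ∀ r, U r l = fun ω => anchorSum ξ θ m l r ω - 𝔼[anchorSum ξ θ m l r] := fun r =>
    funext fun ω => by
      rw [hU, anchorSum_apply θ (by omega),
        integral_anchorSum hindep hL4' hmean hvar θ (by omega)]
  calc 𝔼[fun ω => U k l ω * U i l ω] = cov[anchorSum ξ θ m l k, anchorSum ξ θ m l i] := by
        simp only [hU', covariance]
    _ = _ := covariance_anchorSum hindep hL4' hmean hvar θ hlm hik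

theorem U_same_lag_covariance
    {Ω : Type*} [MeasureSpace Ω] [IsProbabilityMeasure (ℙ : Measure Ω)]
    (ξ : ℤ → Ω → ℝ)
    (hmeas : ∀ k, Measurable (ξ k))
    (hindep : iIndepFun ξ ℙ)
    (hident : ∀ k, IdentDistrib (ξ k) (ξ 0) ℙ ℙ)
    (hcentered : 𝔼[ξ 0] = 0)
    (hL4 : MemLp (ξ 0) 4 ℙ)
    (θ : ℝ) (hθ : θ ∈ Set.Ico (0 : ℝ) 1)
    (M m : ℕ) (hm : 2 * M < m)
    (U : ℕ → ℕ → Ω → ℝ)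
    (hU : ∀ k l ω, U k l ω =
      ∑ j ∈ Finset.Icc 1 (m - 1), θ ^ j * ξ ((k : ℤ) + l - j) ω * ξ (k : ℤ) ω +
      ∑ j ∈ Finset.Icc 1 (m - 1), θ ^ j * ξ ((k : ℤ) + l) ω * ξ ((k : ℤ) - j) ω +
      ξ ((k : ℤ) + l) ω * ξ (k : ℤ) ω - θ ^ l * 𝔼[fun ω => (ξ 0 ω) ^ 2])
    (l : ℕ) (hl1 : 1 ≤ l) (hlM : l ≤ M)
    (i k : ℕ) (hi : 1 ≤ i) (hik : i < k) :
    𝔼[fun ω => U k l ω * U i l ω] =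
      θ ^ (2 * l) * (𝔼[fun ω => (ξ 0 ω) ^ 2]) ^ 2 *
        ((if k < i + l then (1 : ℝ) else 0) +
          (if i + l = k then (1 : ℝ) else 0) *
            ∑ q ∈ Finset.range (m - 2 * l), θ ^ (2 * q)) :=
  U_same_lag_covariance_general ξ hindep hident hcentered hL4 θ M m hm U hU l hlM i k hik
end

section
/- For any k ≥ 1, E(U_{k,0,m,n}²) = E ξ_0⁴ + (E ξ_0²)² · ( 4 Σ_{j=1}^{m−1} θ_n^{2j} − 1 ). -/
/-!
With `S = ∑_{j=1}^{m-1} θ^j ξ_{k-j}` and `σ² = E ξ_0²`, one has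
`U_{k,0,m,n} = 2 S ξ_k + (ξ_k² - σ²)`, where `S` is centered and independent of `ξ_k`.
Expanding the square, the cross term `E[S ξ_k (ξ_k² - σ²)] = E S · E[ξ_k (ξ_k² - σ²)]` vanishes,
`E[S² ξ_k²] = E S² · σ² = σ⁴ ∑ θ^{2j}` since the summands of `S` are orthogonal, and
`E(ξ_k² - σ²)² = Var(ξ_k²) = E ξ_0⁴ - σ⁴`.
-/

open MeasureTheory ProbabilityTheory

theorem MeasureTheory.MemLp.sq_of_four {α : Type*} [MeasurableSpace α] {μ : Measure α}
    {f : α → ℝ} (hf : MemLp f 4 μ) : MemLp (fun x => f x ^ 2) 2 μ := by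
  refine (memLp_two_iff_integrable_sq (hf.aestronglyMeasurable.pow 2)).2 ?_
  have h4 : MemLp f (4 : ℕ) μ := by exact_mod_cast hf
  simpa [← pow_mul, Even.pow_abs ⟨2, rfl⟩] using h4.integrable_norm_pow (by norm_num)

namespace ProbabilityTheory

variable {Ω : Type*} [MeasurableSpace Ω] {μ : Measure Ω}

theorem iIndepFun.indepFun_sum_mul_of_notMem {ι κ : Type*} {X : ι → Ω → ℝ}
    (hX : iIndepFun X μ) (hmeas : ∀ i, Measurable (X i)) (s : Finset κ) (a : κ → ℝ)
    (e : κ → ι) {i : ι} (hi : ∀ j ∈ s, e j ≠ i) :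
    IndepFun (fun ω => ∑ j ∈ s, a j * X (e j) ω) (X i) μ := by
  classical
  have hdisj : Disjoint (s.image e) {i} := by
    simpa [Finset.disjoint_singleton_right] using hi
  have hsum : Measurable fun x : s.image e → ℝ =>
      ∑ j ∈ s.attach, a j * x ⟨e j, Finset.mem_image_of_mem e j.2⟩ :=
    Finset.measurable_sum _ fun j _ => (measurable_pi_apply _).const_mul _
  have := (hX.indepFun_finset _ _ hdisj hmeas).comp hsum
    (measurable_pi_apply ⟨i, Finset.mem_singleton_self i⟩)
  convert this using 1
  · funext ω
    exact (Finset.sum_attach s fun j => a j * X (e j) ω).symm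
  · rfl

theorem integral_sum_const_mul_eq_zero {κ : Type*} {Y : κ → Ω → ℝ} {s : Finset κ} (a : κ → ℝ)
    (hY : ∀ j ∈ s, Integrable (Y j) μ) (hmean : ∀ j ∈ s, μ[Y j] = 0) :
    ∫ ω, ∑ j ∈ s, a j * Y j ω ∂μ = 0 := by
  rw [integral_finsetSum _ fun j hj => (hY j hj).const_mul _]
  exact Finset.sum_eq_zero fun j hj => by rw [integral_const_mul, hmean j hj, mul_zero]

variable [IsProbabilityMeasure μ]

theorem integral_sq_sum_const_mul_of_pairwise_indepFun {κ : Type*} {Y : κ → Ω → ℝ}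
    {s : Finset κ} (a : κ → ℝ) (hY : ∀ j ∈ s, MemLp (Y j) 2 μ) (hmean : ∀ j ∈ s, μ[Y j] = 0)
    (hindep : Set.Pairwise s fun i j => IndepFun (Y i) (Y j) μ) :
    ∫ ω, (∑ j ∈ s, a j * Y j ω) ^ 2 ∂μ = ∑ j ∈ s, a j ^ 2 * ∫ ω, Y j ω ^ 2 ∂μ := by
  have hL2 : ∀ j ∈ s, MemLp (fun ω => a j * Y j ω) 2 μ := fun j hj => (hY j hj).const_mul _
  have hsum_mean : μ[fun ω => ∑ j ∈ s, a j * Y j ω] = 0 :=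
    integral_sum_const_mul_eq_zero a (fun j hj => (hY j hj).integrable one_le_two) hmean
  have hvar := IndepFun.variance_sum hL2 fun i hi j hj hij =>
    (hindep hi hj hij).comp (measurable_const_mul (a i)) (measurable_const_mul (a j))
  have hsum_meas : AEMeasurable (fun ω => ∑ j ∈ s, a j * Y j ω) μ :=
    (memLp_finsetSum s hL2).aemeasurable
  rw [← variance_of_integral_eq_zero hsum_meas hsum_mean, ← Finset.sum_fn, hvar]
  refine Finset.sum_congr rfl fun j hj => ?_
  rw [variance_const_mul, variance_of_integral_eq_zero (hY j hj).aemeasurable (hmean j hj)]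

theorem IndepFun.integral_sq_const_mul_mul_add_comp {S V : Ω → ℝ} {φ : ℝ → ℝ}
    (hSV : IndepFun S V μ) (hS : MemLp S 2 μ) (hS0 : μ[S] = 0) (hV : MemLp V 2 μ)
    (hφ : Measurable φ) (hφV : MemLp (fun ω => φ (V ω)) 2 μ) (c : ℝ) :
    ∫ ω, (c * S ω * V ω + φ (V ω)) ^ 2 ∂μ =
      c ^ 2 * (∫ ω, S ω ^ 2 ∂μ) * (∫ ω, V ω ^ 2 ∂μ) + ∫ ω, φ (V ω) ^ 2 ∂μ := by
  have hsq : IndepFun (fun ω => S ω ^ 2) (fun ω => V ω ^ 2) μ :=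
    hSV.comp (measurable_id.pow_const 2) (measurable_id.pow_const 2)
  have hcross : IndepFun S (fun ω => V ω * φ (V ω)) μ :=
    hSV.comp measurable_id (measurable_id.mul hφ)
  have hVφ : Integrable (fun ω => V ω * φ (V ω)) μ := hV.integrable_mul hφV
  have hsq_int : Integrable (fun ω => S ω ^ 2 * V ω ^ 2) μ :=
    hsq.integrable_mul hS.integrable_sq hV.integrable_sq
  have hcross_int : Integrable (fun ω => S ω * (V ω * φ (V ω))) μ :=
    hcross.integrable_mul (hS.integrable one_le_two) hVφ
  have expand : ∀ ω, (c * S ω * V ω + φ (V ω)) ^ 2 =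
      c ^ 2 * (S ω ^ 2 * V ω ^ 2) + 2 * c * (S ω * (V ω * φ (V ω))) + φ (V ω) ^ 2 :=
    fun ω => by ring
  have h12 : Integrable (fun ω =>
      c ^ 2 * (S ω ^ 2 * V ω ^ 2) + 2 * c * (S ω * (V ω * φ (V ω)))) μ :=
    (hsq_int.const_mul _).add (hcross_int.const_mul _)
  simp_rw [expand]
  rw [integral_add h12 hφV.integrable_sq,
    integral_add (hsq_int.const_mul _) (hcross_int.const_mul _), integral_const_mul,
    integral_const_mul,
    hsq.integral_fun_mul_eq_mul_integral (hS.aestronglyMeasurable.pow 2)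
      (hV.aestronglyMeasurable.pow 2),
    hcross.integral_fun_mul_eq_mul_integral hS.aestronglyMeasurable hVφ.aestronglyMeasurable, hS0]
  ring

theorem integral_sq_sub_sq_of_memLp_four {V : Ω → ℝ} (hV : MemLp V 4 μ) {σ : ℝ}
    (hσ : ∫ ω, V ω ^ 2 ∂μ = σ) :
    ∫ ω, (V ω ^ 2 - σ) ^ 2 ∂μ = ∫ ω, V ω ^ 4 ∂μ - σ ^ 2 := by
  have hV2 := hV.sq_of_four
  rw [← hσ, ← variance_eq_integral hV2.aemeasurable, variance_eq_sub hV2]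
  simp only [Pi.pow_apply, ← pow_mul]

end ProbabilityTheory

theorem U_second_moment_lag_zero_general
    {Ω : Type*} [MeasureSpace Ω] [IsProbabilityMeasure (ℙ : Measure Ω)]
    (ξ : ℤ → Ω → ℝ)
    (hmeas : ∀ k, Measurable (ξ k))
    (hindep : iIndepFun ξ ℙ)
    (hident : ∀ k, IdentDistrib (ξ k) (ξ 0) ℙ ℙ)
    (hcentered : 𝔼[ξ 0] = 0)
    (hL4 : MemLp (ξ 0) 4 ℙ)
    (θ : ℝ)
    (m : ℕ)
    (U : ℕ → ℕ → Ω → ℝ)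
    (hU : ∀ k l ω, U k l ω =
      ∑ j ∈ Finset.Icc 1 (m - 1), θ ^ j * ξ ((k : ℤ) + l - j) ω * ξ (k : ℤ) ω +
      ∑ j ∈ Finset.Icc 1 (m - 1), θ ^ j * ξ ((k : ℤ) + l) ω * ξ ((k : ℤ) - j) ω +
      ξ ((k : ℤ) + l) ω * ξ (k : ℤ) ω - θ ^ l * 𝔼[fun ω => (ξ 0 ω) ^ 2])
    (k : ℕ) :
    𝔼[fun ω => (U k 0 ω) ^ 2] =
      𝔼[fun ω => (ξ 0 ω) ^ 4] +
        (𝔼[fun ω => (ξ 0 ω) ^ 2]) ^ 2 *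
          (4 * ∑ j ∈ Finset.Icc 1 (m - 1), θ ^ (2 * j) - 1) := by
  beta_reduce at hU ⊢
  have hL4' : ∀ i, MemLp (ξ i) 4 ℙ := fun i => (hident i).symm.memLp_snd hL4
  have hL2 : ∀ i, MemLp (ξ i) 2 ℙ := fun i => (hL4' i).mono_exponent (by norm_num)
  have hmean : ∀ i, 𝔼[ξ i] = 0 := fun i => (hident i).integral_eq.trans hcentered
  have hmoment : ∀ i (n : ℕ), ∫ ω, ξ i ω ^ n = ∫ ω, ξ 0 ω ^ n := fun i n =>
    (hident i).pow.integral_eq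
  set S : Ω → ℝ := fun ω => ∑ j ∈ Finset.Icc 1 (m - 1), θ ^ j * ξ (k - j) ω
  have hUk : ∀ ω, U k 0 ω = 2 * S ω * ξ k ω + (ξ k ω ^ 2 - ∫ ω, ξ 0 ω ^ 2) := by
    intro ω
    have hswap : ∑ j ∈ Finset.Icc 1 (m - 1), θ ^ j * ξ k ω * ξ (k - j) ω = S ω * ξ k ω := by
      rw [Finset.sum_mul]
      exact Finset.sum_congr rfl fun j _ => by ring
    simp only [hU, Nat.cast_zero, add_zero, pow_zero, one_mul]
    rw [← Finset.sum_mul, hswap]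
    ring
  have hSV : IndepFun S (ξ k) ℙ :=
    hindep.indepFun_sum_mul_of_notMem hmeas _ _ _ fun j hj => by
      simp only [Finset.mem_Icc] at hj
      omega
  have hS0 : 𝔼[S] = 0 :=
    integral_sum_const_mul_eq_zero _ (fun j _ => (hL2 _).integrable one_le_two) fun j _ => hmean _
  have hS2 : ∫ ω, S ω ^ 2 = (∫ ω, ξ 0 ω ^ 2) * ∑ j ∈ Finset.Icc 1 (m - 1), θ ^ (2 * j) := by
    rw [integral_sq_sum_const_mul_of_pairwise_indepFun _ (fun j _ => hL2 _) (fun j _ => hmean _)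
      fun i _ j _ hij => hindep.indepFun (by omega), Finset.mul_sum]
    exact Finset.sum_congr rfl fun j _ => by rw [hmoment, ← pow_mul, mul_comm, mul_comm j]
  have hφ : MemLp (fun ω => ξ k ω ^ 2 - ∫ ω, ξ 0 ω ^ 2) 2 ℙ :=
    (hL4' k).sq_of_four.sub (memLp_const _)
  simp only [hUk]
  rw [hSV.integral_sq_const_mul_mul_add_comp (φ := fun x => x ^ 2 - ∫ ω, ξ 0 ω ^ 2)
      (memLp_finsetSum _ fun j _ => (hL2 _).const_mul _) hS0 (hL2 k) (by fun_prop) hφ,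
    integral_sq_sub_sq_of_memLp_four (hL4' k) (hmoment k 2), hS2, hmoment k 2, hmoment k 4]
  ring

theorem U_second_moment_lag_zero
    {Ω : Type*} [MeasureSpace Ω] [IsProbabilityMeasure (ℙ : Measure Ω)]
    (ξ : ℤ → Ω → ℝ)
    (hmeas : ∀ k, Measurable (ξ k))
    (hindep : iIndepFun ξ ℙ)
    (hident : ∀ k, IdentDistrib (ξ k) (ξ 0) ℙ ℙ)
    (hcentered : 𝔼[ξ 0] = 0)
    (hL4 : MemLp (ξ 0) 4 ℙ)
    (θ : ℝ) (hθ : θ ∈ Set.Ico (0 : ℝ) 1)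
    (M m : ℕ) (hm : 2 * M < m)
    (U : ℕ → ℕ → Ω → ℝ)
    (hU : ∀ k l ω, U k l ω =
      ∑ j ∈ Finset.Icc 1 (m - 1), θ ^ j * ξ ((k : ℤ) + l - j) ω * ξ (k : ℤ) ω +
      ∑ j ∈ Finset.Icc 1 (m - 1), θ ^ j * ξ ((k : ℤ) + l) ω * ξ ((k : ℤ) - j) ω +
      ξ ((k : ℤ) + l) ω * ξ (k : ℤ) ω - θ ^ l * 𝔼[fun ω => (ξ 0 ω) ^ 2])
    (k : ℕ) (hk : 1 ≤ k) :
    𝔼[fun ω => (U k 0 ω) ^ 2] =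
      𝔼[fun ω => (ξ 0 ω) ^ 4] +
        (𝔼[fun ω => (ξ 0 ω) ^ 2]) ^ 2 *
          (4 * ∑ j ∈ Finset.Icc 1 (m - 1), θ ^ (2 * j) - 1) :=
  U_second_moment_lag_zero_general ξ hmeas hindep hident hcentered hL4 θ m U hU k
end

section
/- For integers 1 ≤ i < k and 1 ≤ l ≤ M, E(U_{i,0,m,n} U_{k,l,m,n}) = 0. -/
/-!
`U_{i,0}` is a centered function of the `ξ_a` with `a ≤ i < k`, while every term of `U_{k,l}`
other than the constant is a product `ξ_e ξ_d` with `d ∈ {k, k + l}`, so `d > i`. If `e ≠ d`,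
then `ξ_d` is centered and independent of `U_{i,0} ξ_e`; if `e = d`, then `ξ_d²` is independent
of the centered `U_{i,0}`. Either way `E(U_{i,0} ξ_e ξ_d) = 0`, and the constant term contributes
`E U_{i,0} = 0` times a constant.
-/

open MeasureTheory ProbabilityTheory Filter Real

lemma MeasureTheory.MemLp.mul_of_two_mul {α 𝕜 : Type*} [NormedRing 𝕜] {_ : MeasurableSpace α}
    {μ : Measure α} {p : ENNReal} {f g : α → 𝕜} (hf : MemLp f (2 * p) μ)
    (hg : MemLp g (2 * p) μ) : MemLp (fun x => f x * g x) p μ := by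
  have : ENNReal.HolderTriple (2 * p) (2 * p) p :=
    ⟨by rw [ENNReal.mul_inv (by simp) (by simp), ← add_mul, ENNReal.inv_two_add_inv_two, one_mul]⟩
  exact hg.mul' hf

section Coordinates

variable {Ω ι : Type*} {mΩ : MeasurableSpace Ω} {μ : Measure Ω} {ξ : ι → Ω → ℝ}

abbrev sigmaOf (ξ : ι → Ω → ℝ) (S : Set ι) : MeasurableSpace Ω :=
  ⨆ a ∈ S, MeasurableSpace.comap (ξ a) inferInstance

lemma measurable_sigmaOf {S : Set ι} {a : ι} (ha : a ∈ S) : Measurable[sigmaOf ξ S] (ξ a) :=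
  Measurable.of_comap_le <|
    le_iSup₂ (f := fun a (_ : a ∈ S) => MeasurableSpace.comap (ξ a) inferInstance) a ha

lemma sigmaOf_mono {S T : Set ι} (hST : S ⊆ T) : sigmaOf ξ S ≤ sigmaOf ξ T :=
  biSup_mono hST

lemma sigmaOf_le (hmeas : ∀ a, Measurable (ξ a)) (S : Set ι) : sigmaOf ξ S ≤ mΩ :=
  iSup₂_le fun a _ => (hmeas a).comap_le

lemma ProbabilityTheory.iIndepFun.indepFun_of_measurable_sigmaOf (hindep : iIndepFun ξ μ)
    (hmeas : ∀ a, Measurable (ξ a)) {S : Set ι} {P : Ω → ℝ} (hP : Measurable[sigmaOf ξ S] P)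
    {d : ι} (hd : d ∉ S) : IndepFun P (ξ d) μ := by
  rw [IndepFun_iff_Indep]
  have hST : Indep (sigmaOf ξ S) (sigmaOf ξ {d}) μ :=
    indep_iSup_of_disjoint (fun a => (hmeas a).comap_le)
      ((iIndepFun_iff_iIndep _ _ _).1 hindep) (Set.disjoint_singleton_right.2 hd)
  exact indep_of_indep_of_le hST hP.comap_le
    (measurable_sigmaOf (ξ := ξ) (Set.mem_singleton d)).comap_le

lemma ProbabilityTheory.iIndepFun.integral_mul_eq_zero (hindep : iIndepFun ξ μ)
    {a b : ι} (hab : a ≠ b) (ha : Measurable (ξ a)) (hb : Measurable (ξ b)) (hb0 : μ[ξ b] = 0) :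
    ∫ ω, ξ a ω * ξ b ω ∂μ = 0 := by
  have h := (hindep.indepFun hab).integral_mul_eq_mul_integral
    ha.aestronglyMeasurable hb.aestronglyMeasurable
  rwa [hb0, mul_zero] at h

lemma ProbabilityTheory.iIndepFun.integral_mul_mul_eq_zero (hindep : iIndepFun ξ μ)
    (hmeas : ∀ a, Measurable (ξ a)) {S : Set ι} {P : Ω → ℝ} (hP : Measurable[sigmaOf ξ S] P)
    (hPc : μ[P] = 0) {d : ι} (hd : d ∉ S) (hd0 : μ[ξ d] = 0) (e : ι) :
    ∫ ω, P ω * (ξ e ω * ξ d ω) ∂μ = 0 := by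
  have hPm : AEStronglyMeasurable P μ := (hP.mono (sigmaOf_le hmeas S) le_rfl).aestronglyMeasurable
  obtain rfl | hed := eq_or_ne e d
  · have hind : IndepFun P (fun ω => ξ e ω * ξ e ω) μ :=
      (hindep.indepFun_of_measurable_sigmaOf hmeas hP hd).comp measurable_id
        (measurable_id.mul measurable_id)
    have h := hind.integral_mul_eq_mul_integral hPm ((hmeas e).mul (hmeas e)).aestronglyMeasurable
    rwa [hPc, zero_mul] at h
  · have hPe : Measurable[sigmaOf ξ (insert e S)] fun ω => P ω * ξ e ω :=
      (hP.mono (sigmaOf_mono (Set.subset_insert e S)) le_rfl).mul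
        (measurable_sigmaOf (Set.mem_insert e S))
    have hind := hindep.indepFun_of_measurable_sigmaOf hmeas hPe
      (by simp [hd, hed.symm] : d ∉ insert e S)
    have h := hind.integral_mul_eq_mul_integral (hPm.mul (hmeas e).aestronglyMeasurable)
      (hmeas d).aestronglyMeasurable
    simp only [Pi.mul_apply, hd0, mul_zero] at h
    simpa only [mul_assoc] using h

end Coordinates

section LagTerm

variable {Ω : Type*} {mΩ : MeasurableSpace Ω} {μ : Measure Ω} {ξ : ℤ → Ω → ℝ}

/-- The paper's `U_{k,l,m,n}`, with `θ = θ_n` and the constant `c` standing for `E ξ_0²`. -/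
noncomputable def lagTerm (ξ : ℤ → Ω → ℝ) (θ : ℝ) (m : ℕ) (c : ℝ) (k l : ℕ) (ω : Ω) : ℝ :=
  ∑ j ∈ Finset.Icc 1 (m - 1), θ ^ j * ξ ((k : ℤ) + l - j) ω * ξ (k : ℤ) ω +
    ∑ j ∈ Finset.Icc 1 (m - 1), θ ^ j * ξ ((k : ℤ) + l) ω * ξ ((k : ℤ) - j) ω +
    ξ ((k : ℤ) + l) ω * ξ (k : ℤ) ω - θ ^ l * c

variable (θ : ℝ) (m : ℕ) (c : ℝ) (k l : ℕ)

lemma measurable_lagTerm :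
    Measurable[sigmaOf ξ (Set.Iic ((k : ℤ) + l))] (lagTerm ξ θ m c k l) := by
  have h : ∀ a : ℤ, a ≤ k + l → Measurable[sigmaOf ξ (Set.Iic ((k : ℤ) + l))] (ξ a) :=
    fun a ha => measurable_sigmaOf ha
  refine ((((Finset.measurable_sum _ fun j _ => ?_).add
    (Finset.measurable_sum _ fun j _ => ?_)).add ?_).sub measurable_const)
  · exact ((h _ (by omega)).const_mul _).mul (h _ (by omega))
  · exact ((h _ le_rfl).const_mul _).mul (h _ (by omega))
  · exact (h _ le_rfl).mul (h _ (by omega))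

lemma memLp_lagTerm [IsFiniteMeasure μ] (hL4 : ∀ a, MemLp (ξ a) 4 μ) :
    MemLp (lagTerm ξ θ m c k l) 2 μ := by
  have h : ∀ a b, MemLp (fun ω => ξ a ω * ξ b ω) 2 μ := fun a b =>
    MemLp.mul_of_two_mul (by norm_num [hL4 a]) (by norm_num [hL4 b])
  have hθ : ∀ (j : ℕ) a b, MemLp (fun ω => θ ^ j * ξ a ω * ξ b ω) 2 μ := fun j a b => by
    simpa only [mul_assoc] using (h a b).const_mul (θ ^ j)
  exact (((memLp_finsetSum _ fun j _ => hθ j _ _).add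
    (memLp_finsetSum _ fun j _ => hθ j _ _)).add (h _ _)).sub (memLp_const _)

lemma integral_lagTerm [IsProbabilityMeasure μ] (hindep : iIndepFun ξ μ)
    (hmeas : ∀ a, Measurable (ξ a)) (hcent : ∀ a, μ[ξ a] = 0) (hL2 : ∀ a, MemLp (ξ a) 2 μ)
    (hvar : ∀ a, ∫ ω, ξ a ω ^ 2 ∂μ = c) (hl : l ≤ m - 1) :
    μ[lagTerm ξ θ m c k l] = 0 := by
  have hcov : ∀ a b, ∫ ω, ξ a ω * ξ b ω ∂μ = if a = b then c else 0 := by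
    intro a b
    split_ifs with hab
    · simpa only [hab, sq] using hvar b
    · exact hindep.integral_mul_eq_zero hab (hmeas a) (hmeas b) (hcent b)
  have hint : ∀ a b, Integrable (fun ω => ξ a ω * ξ b ω) μ := fun a b =>
    (hL2 a).integrable_mul (hL2 b)
  have hθ : ∀ (j : ℕ) a b, ∫ ω, θ ^ j * ξ a ω * ξ b ω ∂μ = θ ^ j * ∫ ω, ξ a ω * ξ b ω ∂μ :=
    fun j a b => by simp only [mul_assoc, integral_const_mul]
  have hθint : ∀ (j : ℕ) a b, Integrable (fun ω => θ ^ j * ξ a ω * ξ b ω) μ := fun j a b => by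
    simpa only [mul_assoc] using (hint a b).const_mul (θ ^ j)
  unfold lagTerm
  rw [integral_sub, integral_add, integral_add, integral_finsetSum, integral_finsetSum]
  · have h1 : ∀ j ∈ Finset.Icc 1 (m - 1),
        θ ^ j * (if (k : ℤ) + l - j = k then c else 0) = if l = j then θ ^ l * c else 0 := by
      intro j _
      by_cases hj : l = j
      · simp [hj]
      · rw [if_neg (by omega), if_neg hj, mul_zero]
    have h2 : ∀ j ∈ Finset.Icc 1 (m - 1), θ ^ j * (if (k : ℤ) + l = k - j then c else 0) = 0 := by
      intro j hj
      rw [Finset.mem_Icc] at hj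
      rw [if_neg (by omega), mul_zero]
    simp only [hθ, hcov]
    rw [Finset.sum_congr rfl h1, Finset.sum_congr rfl h2, Finset.sum_ite_eq, integral_const]
    rcases Nat.eq_zero_or_pos l with rfl | hl0
    · simp
    · simp [hl, show 1 ≤ l from hl0, hl0.ne']
  all_goals fun_prop

lemma integral_mul_lagTerm_eq_zero [IsFiniteMeasure μ] (hindep : iIndepFun ξ μ)
    (hmeas : ∀ a, Measurable (ξ a)) (hcent : ∀ a, μ[ξ a] = 0) (hL4 : ∀ a, MemLp (ξ a) 4 μ)
    {P : Ω → ℝ} (hP : Measurable[sigmaOf ξ (Set.Iio (k : ℤ))] P) (hP2 : MemLp P 2 μ)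
    (hPc : μ[P] = 0) :
    ∫ ω, P ω * lagTerm ξ θ m c k l ω ∂μ = 0 := by
  have hzero : ∀ e d, (k : ℤ) ≤ d → ∫ ω, P ω * (ξ e ω * ξ d ω) ∂μ = 0 := fun e d hd =>
    hindep.integral_mul_mul_eq_zero hmeas hP hPc (by simpa using hd) (hcent d) e
  have hint : ∀ e d, Integrable (fun ω => P ω * (ξ e ω * ξ d ω)) μ := fun e d =>
    hP2.integrable_mul (MemLp.mul_of_two_mul (p := 2) (by norm_num [hL4 e]) (by norm_num [hL4 d]))
  have hexp : (fun ω => P ω * lagTerm ξ θ m c k l ω) = fun ω =>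
      ∑ j ∈ Finset.Icc 1 (m - 1), θ ^ j * (P ω * (ξ ((k : ℤ) + l - j) ω * ξ (k : ℤ) ω)) +
      ∑ j ∈ Finset.Icc 1 (m - 1), θ ^ j * (P ω * (ξ ((k : ℤ) - j) ω * ξ ((k : ℤ) + l) ω)) +
      P ω * (ξ ((k : ℤ) + l) ω * ξ (k : ℤ) ω) - θ ^ l * c * P ω := by
    funext ω
    simp only [lagTerm, mul_sub, mul_add, Finset.mul_sum, mul_comm, mul_assoc, mul_left_comm]
  rw [hexp, integral_sub, integral_add, integral_add, integral_finsetSum, integral_finsetSum]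
  · simp only [integral_const_mul, hPc, hzero _ _ le_rfl, hzero _ ((k : ℤ) + l) (by omega),
      mul_zero, Finset.sum_const_zero, add_zero, sub_zero]
  all_goals first | fun_prop | exact (hP2.integrable one_le_two).const_mul _

end LagTerm

theorem U_cross_covariance_zero_lag_first_general
    {Ω : Type*} [MeasureSpace Ω] [IsProbabilityMeasure (ℙ : Measure Ω)]
    (ξ : ℤ → Ω → ℝ)
    (hmeas : ∀ k, Measurable (ξ k))
    (hindep : iIndepFun ξ ℙ)
    (hident : ∀ k, IdentDistrib (ξ k) (ξ 0) ℙ ℙ)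
    (hcentered : 𝔼[ξ 0] = 0)
    (hL4 : MemLp (ξ 0) 4 ℙ)
    (θ : ℝ)
    (m : ℕ)
    (U : ℕ → ℕ → Ω → ℝ)
    (hU : ∀ k l ω, U k l ω =
      ∑ j ∈ Finset.Icc 1 (m - 1), θ ^ j * ξ ((k : ℤ) + l - j) ω * ξ (k : ℤ) ω +
      ∑ j ∈ Finset.Icc 1 (m - 1), θ ^ j * ξ ((k : ℤ) + l) ω * ξ ((k : ℤ) - j) ω +
      ξ ((k : ℤ) + l) ω * ξ (k : ℤ) ω - θ ^ l * 𝔼[fun ω => (ξ 0 ω) ^ 2])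
    (l : ℕ)
    (i k : ℕ) (hik : i < k) :
    𝔼[fun ω => U i 0 ω * U k l ω] = 0 := by
  set c := 𝔼[fun ω => (ξ 0 ω) ^ 2]
  obtain rfl : U = lagTerm ξ θ m c := funext fun k => funext fun l => funext (hU k l)
  have hcent : ∀ a, 𝔼[ξ a] = 0 := fun a => (hident a).integral_eq.trans hcentered
  have hL4' : ∀ a, MemLp (ξ a) 4 ℙ := fun a => (hident a).symm.memLp_snd hL4
  have hvar : ∀ a, ∫ ω, ξ a ω ^ 2 = c := fun a =>
    ((hident a).comp (measurable_id.pow_const 2)).integral_eq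
  have hpast : Measurable[sigmaOf ξ (Set.Iio (k : ℤ))] (lagTerm ξ θ m c i 0) :=
    (measurable_lagTerm θ m c i 0).mono
      (sigmaOf_mono (Set.Iic_subset_Iio.2 (by simpa using hik))) le_rfl
  exact integral_mul_lagTerm_eq_zero θ m c k l hindep hmeas hcent hL4' hpast
    (memLp_lagTerm θ m c i 0 hL4')
    (integral_lagTerm θ m c i 0 hindep hmeas hcent
      (fun a => (hL4' a).mono_exponent (by norm_num)) hvar (Nat.zero_le _))

theorem U_cross_covariance_zero_lag_first
    {Ω : Type*} [MeasureSpace Ω] [IsProbabilityMeasure (ℙ : Measure Ω)]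
    (ξ : ℤ → Ω → ℝ)
    (hmeas : ∀ k, Measurable (ξ k))
    (hindep : iIndepFun ξ ℙ)
    (hident : ∀ k, IdentDistrib (ξ k) (ξ 0) ℙ ℙ)
    (hcentered : 𝔼[ξ 0] = 0)
    (hL4 : MemLp (ξ 0) 4 ℙ)
    (θ : ℝ) (hθ : θ ∈ Set.Ico (0 : ℝ) 1)
    (M m : ℕ) (hm : 2 * M < m)
    (U : ℕ → ℕ → Ω → ℝ)
    (hU : ∀ k l ω, U k l ω =
      ∑ j ∈ Finset.Icc 1 (m - 1), θ ^ j * ξ ((k : ℤ) + l - j) ω * ξ (k : ℤ) ω +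
      ∑ j ∈ Finset.Icc 1 (m - 1), θ ^ j * ξ ((k : ℤ) + l) ω * ξ ((k : ℤ) - j) ω +
      ξ ((k : ℤ) + l) ω * ξ (k : ℤ) ω - θ ^ l * 𝔼[fun ω => (ξ 0 ω) ^ 2])
    (l : ℕ) (hl1 : 1 ≤ l) (hlM : l ≤ M)
    (i k : ℕ) (hi : 1 ≤ i) (hik : i < k) :
    𝔼[fun ω => U i 0 ω * U k l ω] = 0 :=
  U_cross_covariance_zero_lag_first_general ξ hmeas hindep hident hcentered hL4 θ m U hU l i k hik
end

section
/- For integers 1 ≤ i < k and 1 ≤ l ≤ M, E(U_{k,0,m,n} U_{i,l,m,n}) = 2 θ_n^l (E ξ_0²)² · ( 1_{A₁} + 1_{A₂} Σ_{j=0}^{m−1−l} θ_n^{2j} ), where A₁ denotes the condition i + l > k and A₂ the condition i + l = k. -/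
/-!
Write `σ² = E ξ₀²`. Merging its two sums, `U_{k,0} = ξ_k² - σ² + 2 ∑_j θ^j ξ_k ξ_{k-j}`, which is
centred, so the constant of `U_{i,l}` drops out and `E(U_{k,0} U_{i,l})` is a combination of
`E(U_{k,0} ξ_a ξ_b)` with `b < k`. In such a fourth moment every index must occur twice: the part
`ξ_k² - σ²` contributes nothing, and `ξ_k ξ_{k-j} ξ_a ξ_b` survives only for `a = k`, `b = k - j`.
Hence `E(U_{k,0} ξ_a ξ_b) = 2 σ⁴ θ^{k-b}` if `a = k` and `k - b < m`, and `0` otherwise. Among the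
products in `U_{i,l}`, the terms `ξ_{i+l-j} ξ_i` contribute `2 σ⁴ θ^l` exactly when `k < i + l`
(through `j = i + l - k`), and the terms `ξ_{i+l} ξ_{i-j}`, `ξ_{i+l} ξ_i` contribute
`2 σ⁴ θ^{l+2j}` for `0 ≤ j < m - l` exactly when `i + l = k`.
-/

open MeasureTheory ProbabilityTheory Finset

instance ENNReal.HolderTriple.instFourFourTwo : ENNReal.HolderTriple 4 4 2 := ⟨by
  rw [← two_mul, show (4 : ENNReal) = 2 * 2 by norm_num,
    ENNReal.mul_inv (by norm_num) (by norm_num), ← mul_assoc,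
    ENNReal.mul_inv_cancel (by norm_num) (by norm_num), one_mul]⟩

section IndependentFamily

variable {ι Ω : Type*} {mΩ : MeasurableSpace Ω} {μ : Measure Ω} {ξ : ι → Ω → ℝ}

lemma ProbabilityTheory.iIndepFun.indepFun_prodMk₃ (hmeas : ∀ a, Measurable (ξ a))
    (hindep : iIndepFun ξ μ) {p q r s : ι} (hq : q ≠ p) (hr : r ≠ p) (hs : s ≠ p) :
    IndepFun (fun ω => (ξ q ω, ξ r ω, ξ s ω)) (ξ p) μ := by
  classical
  have h := hindep.indepFun_finset {q, r, s} {p} (by simp [hq.symm, hr.symm, hs.symm]) hmeas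
  have hφ : Measurable fun x : ({q, r, s} : Finset ι) → ℝ =>
      (x ⟨q, by simp⟩, x ⟨r, by simp⟩, x ⟨s, by simp⟩) := by fun_prop
  exact h.comp hφ (measurable_pi_apply ⟨p, mem_singleton_self p⟩)

lemma integral_comp_mul_comp_eq_zero (hmeas : ∀ a, Measurable (ξ a)) (hindep : iIndepFun ξ μ)
    {p q r s : ι} (hq : q ≠ p) (hr : r ≠ p) (hs : s ≠ p)
    {F : ℝ × ℝ × ℝ → ℝ} (hF : Measurable F) {g : ℝ → ℝ} (hg : Measurable g)
    (hg0 : ∫ ω, g (ξ p ω) ∂μ = 0) :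
    ∫ ω, F (ξ q ω, ξ r ω, ξ s ω) * g (ξ p ω) ∂μ = 0 := by
  have h := ((hindep.indepFun_prodMk₃ hmeas hq hr hs).comp hF hg).integral_fun_mul_eq_mul_integral
    (hF.comp ((hmeas q).prodMk ((hmeas r).prodMk (hmeas s)))).aestronglyMeasurable
    (hg.comp (hmeas p)).aestronglyMeasurable
  simpa [Function.comp_def, hg0] using h

variable [DecidableEq ι] (hmeas : ∀ a, Measurable (ξ a)) (hindep : iIndepFun ξ μ)
  (hcent : ∀ a, ∫ ω, ξ a ω ∂μ = 0) {v : ℝ} (hvar : ∀ a, ∫ ω, ξ a ω ^ 2 ∂μ = v)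
include hmeas hindep hcent hvar

lemma integral_mul_eq_ite (a b : ι) : ∫ ω, ξ a ω * ξ b ω ∂μ = if a = b then v else 0 := by
  rcases eq_or_ne a b with rfl | hab
  · simpa [sq] using hvar a
  · rw [if_neg hab]
    exact integral_comp_mul_comp_eq_zero hmeas hindep hab hab hab (F := fun x => x.1)
      measurable_fst measurable_id (hcent b)

lemma integral_mul_mul_sq {a b k : ι} (hb : b ≠ k) :
    ∫ ω, ξ a ω * ξ b ω * (ξ k ω * ξ k ω) ∂μ = v * ∫ ω, ξ a ω * ξ b ω ∂μ := by
  rcases eq_or_ne a k with rfl | ha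
  · rw [integral_mul_eq_ite hmeas hindep hcent hvar, if_neg hb.symm, mul_zero]
    convert integral_comp_mul_comp_eq_zero hmeas hindep hb.symm hb.symm hb.symm
      (F := fun x => x.1 ^ 3) (g := fun x => x) (by fun_prop) measurable_id (hcent b) using 3
    ring
  · have hind := hindep.indepFun_mul_mul hmeas k k a b ha.symm hb.symm ha.symm hb.symm
    have h := hind.integral_fun_mul_eq_mul_integral (by fun_prop) (by fun_prop)
    simp only [Pi.mul_apply, ← sq, hvar] at h
    calc ∫ ω, ξ a ω * ξ b ω * (ξ k ω * ξ k ω) ∂μ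
        = ∫ ω, ξ k ω ^ 2 * (ξ a ω * ξ b ω) ∂μ := by congr 1; ext ω; ring
      _ = _ := h

lemma integral_mul_mul_mul_mul {a b c p : ι} (hb : b ≠ p) (hc : c ≠ p) :
    ∫ ω, ξ a ω * ξ b ω * (ξ c ω * ξ p ω) ∂μ = if a = p ∧ b = c then v ^ 2 else 0 := by
  rcases eq_or_ne a p with rfl | ha
  · have hind := hindep.indepFun_mul_mul hmeas a a b c hb.symm hc.symm hb.symm hc.symm
    have h := hind.integral_fun_mul_eq_mul_integral (by fun_prop) (by fun_prop)
    simp only [Pi.mul_apply] at h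
    calc ∫ ω, ξ a ω * ξ b ω * (ξ c ω * ξ a ω) ∂μ
        = ∫ ω, ξ a ω * ξ a ω * (ξ b ω * ξ c ω) ∂μ := by congr 1; ext ω; ring
      _ = _ := by
        rw [h, integral_mul_eq_ite hmeas hindep hcent hvar,
          integral_mul_eq_ite hmeas hindep hcent hvar]
        simp [sq]
  · rw [if_neg (fun h => ha h.1)]
    convert integral_comp_mul_comp_eq_zero hmeas hindep ha hb hc
      (F := fun x => x.1 * x.2.1 * x.2.2) (g := fun x => x) (by fun_prop) measurable_id
      (hcent p) using 3
    ring

end IndependentFamily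

section LagStatistic

variable {Ω : Type*} {mΩ : MeasurableSpace Ω} {μ : Measure Ω} {ξ : ℤ → Ω → ℝ}

/-- `U_{k,l}` of the paper, with `E ξ₀²` replaced by the parameter `v`. -/
def lagStat (ξ : ℤ → Ω → ℝ) (v θ : ℝ) (m : ℕ) (k : ℤ) (l : ℕ) (ω : Ω) : ℝ :=
  ∑ j ∈ Icc 1 (m - 1), θ ^ j * ξ (k + l - j) ω * ξ k ω +
  ∑ j ∈ Icc 1 (m - 1), θ ^ j * ξ (k + l) ω * ξ (k - j) ω +
  ξ (k + l) ω * ξ k ω - θ ^ l * v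

variable {v θ : ℝ} {m : ℕ}

lemma memLp_lagStat [IsFiniteMeasure μ] (hL4 : ∀ a, MemLp (ξ a) 4 μ) (k : ℤ) (l : ℕ) :
    MemLp (lagStat ξ v θ m k l) 2 μ := by
  have hpair : ∀ a b, MemLp (fun ω => ξ a ω * ξ b ω) 2 μ := fun a b => (hL4 b).mul' (hL4 a)
  have hterm : ∀ (j : ℕ) a b, MemLp (fun ω => θ ^ j * ξ a ω * ξ b ω) 2 μ := fun j a b => by
    simpa only [mul_assoc] using (hpair a b).const_mul (θ ^ j)
  exact (((memLp_finsetSum _ fun j _ => hterm j _ _).add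
    (memLp_finsetSum _ fun j _ => hterm j _ _)).add (hpair _ _)).sub (memLp_const (θ ^ l * v))

lemma integral_mul_lagStat [IsFiniteMeasure μ] (hL4 : ∀ a, MemLp (ξ a) 4 μ) {W : Ω → ℝ}
    (hW : MemLp W 2 μ) (k : ℤ) (l : ℕ) :
    ∫ ω, W ω * lagStat ξ v θ m k l ω ∂μ =
      ∑ j ∈ Icc 1 (m - 1), θ ^ j * ∫ ω, W ω * (ξ (k + l - j) ω * ξ k ω) ∂μ +
      ∑ j ∈ Icc 1 (m - 1), θ ^ j * ∫ ω, W ω * (ξ (k + l) ω * ξ (k - j) ω) ∂μ +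
      ∫ ω, W ω * (ξ (k + l) ω * ξ k ω) ∂μ - θ ^ l * v * ∫ ω, W ω ∂μ := by
  have hint : ∀ a b, Integrable (fun ω => W ω * (ξ a ω * ξ b ω)) μ := fun a b =>
    hW.integrable_mul ((hL4 b).mul' (hL4 a) (r := 2))
  have hsum : ∀ f g : ℕ → ℤ, Integrable (fun ω => ∑ j ∈ Icc 1 (m - 1),
      θ ^ j * (W ω * (ξ (f j) ω * ξ (g j) ω))) μ := fun f g =>
    integrable_finsetSum _ fun j _ => (hint _ _).const_mul _
  have hpoint : (fun ω => W ω * lagStat ξ v θ m k l ω) = fun ω =>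
      ∑ j ∈ Icc 1 (m - 1), θ ^ j * (W ω * (ξ (k + l - j) ω * ξ k ω)) +
      ∑ j ∈ Icc 1 (m - 1), θ ^ j * (W ω * (ξ (k + l) ω * ξ (k - j) ω)) +
      W ω * (ξ (k + l) ω * ξ k ω) - θ ^ l * v * W ω := by
    ext ω
    simp only [lagStat, mul_sub, mul_add, Finset.mul_sum]
    congr 1
    · congr 1
      congr 1 <;> exact sum_congr rfl fun j _ => by ring
    · ring
  rw [hpoint, integral_sub ?_ ((hW.integrable one_le_two).const_mul _),
    integral_add ?_ (hint _ _), integral_add (hsum _ _) (hsum _ _),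
    integral_finsetSum _ fun j _ => (hint _ _).const_mul _,
    integral_finsetSum _ fun j _ => (hint _ _).const_mul _, integral_const_mul]
  · simp only [integral_const_mul]
  · exact (hsum _ _).add (hsum _ _)
  · exact ((hsum _ _).add (hsum _ _)).add (hint _ _)

variable [IsProbabilityMeasure μ] (hmeas : ∀ a, Measurable (ξ a)) (hindep : iIndepFun ξ μ)
  (hcent : ∀ a, ∫ ω, ξ a ω ∂μ = 0) (hvar : ∀ a, ∫ ω, ξ a ω ^ 2 ∂μ = v)
  (hL4 : ∀ a, MemLp (ξ a) 4 μ)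
include hmeas hindep hcent hvar hL4

lemma integral_lagStat_zero_eq_zero (k : ℤ) : ∫ ω, lagStat ξ v θ m k 0 ω ∂μ = 0 := by
  have h := integral_mul_lagStat (v := v) (θ := θ) (m := m) hL4 (memLp_const 1) k 0
  have hoff : ∀ j ∈ Icc 1 (m - 1), θ ^ j * ∫ ω, ξ (k - j) ω * ξ k ω ∂μ = 0 := fun j hj => by
    rw [integral_mul_eq_ite hmeas hindep hcent hvar,
      if_neg (by simp only [mem_Icc] at hj; omega), mul_zero]
  have hoff' : ∀ j ∈ Icc 1 (m - 1), θ ^ j * ∫ ω, ξ k ω * ξ (k - j) ω ∂μ = 0 := fun j hj => by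
    rw [integral_mul_eq_ite hmeas hindep hcent hvar,
      if_neg (by simp only [mem_Icc] at hj; omega), mul_zero]
  simp only [one_mul, Nat.cast_zero, add_zero, pow_zero] at h
  rw [h, sum_eq_zero hoff, sum_eq_zero hoff', integral_mul_eq_ite hmeas hindep hcent hvar,
    if_pos rfl]
  simp

lemma integral_lagStat_zero_mul {k b : ℤ} (hb : b < k) (a : ℤ) :
    ∫ ω, lagStat ξ v θ m k 0 ω * (ξ a ω * ξ b ω) ∂μ =
      if a = k ∧ k - b < m then 2 * v ^ 2 * θ ^ (k - b).toNat else 0 := by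
  have hquad : ∀ j ∈ Icc 1 (m - 1), ∫ ω, ξ a ω * ξ b ω * (ξ (k - j) ω * ξ k ω) ∂μ =
      if a = k ∧ b = k - j then v ^ 2 else 0 := fun j hj => by
    simp only [mem_Icc] at hj
    exact integral_mul_mul_mul_mul hmeas hindep hcent hvar hb.ne (by omega)
  have hquad' : ∀ j ∈ Icc 1 (m - 1), ∫ ω, ξ a ω * ξ b ω * (ξ k ω * ξ (k - j) ω) ∂μ =
      if a = k ∧ b = k - j then v ^ 2 else 0 := fun j hj => by
    rw [← hquad j hj]; congr 1; ext ω; ring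
  have hsum : ∑ j ∈ Icc 1 (m - 1), θ ^ j * (if a = k ∧ b = k - j then v ^ 2 else 0) =
      if a = k ∧ k - b < m then v ^ 2 * θ ^ (k - b).toNat else 0 := by
    rcases eq_or_ne a k with rfl | ha
    · have hsingle : ∀ j ∈ Icc 1 (m - 1), θ ^ j * (if a = a ∧ b = a - j then v ^ 2 else 0) =
          if (a - b).toNat = j then v ^ 2 * θ ^ j else 0 := fun j _ => by
        split_ifs <;> first | (exfalso; omega) | ring
      rw [sum_congr rfl hsingle, sum_ite_eq]
      refine if_congr ?_ rfl rfl
      simp only [mem_Icc, true_and]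
      omega
    · simp [ha]
  calc ∫ ω, lagStat ξ v θ m k 0 ω * (ξ a ω * ξ b ω) ∂μ
      = ∫ ω, (ξ a ω * ξ b ω) * lagStat ξ v θ m k 0 ω ∂μ := by simp only [mul_comm]
    _ = _ := by
      rw [integral_mul_lagStat hL4 ((hL4 b).mul' (hL4 a))]
      simp only [Nat.cast_zero, add_zero, pow_zero, one_mul]
      rw [sum_congr rfl fun j hj => congrArg (θ ^ j * ·) (hquad j hj),
        sum_congr rfl fun j hj => congrArg (θ ^ j * ·) (hquad' j hj),
        integral_mul_mul_sq hmeas hindep hcent hvar hb.ne, hsum]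
      split_ifs <;> ring

end LagStatistic

lemma sum_Icc_pow_mul_ite_lag_eq {θ c : ℝ} {i k l m : ℕ} (hik : i < k) (hlm : l < m) :
    ∑ j ∈ Icc 1 (m - 1), θ ^ j *
        (if (i : ℤ) + l - j = k ∧ (k : ℤ) - i < m then c * θ ^ ((k : ℤ) - i).toNat else 0) =
      if k < i + l then c * θ ^ l else 0 := by
  by_cases hlt : k < i + l
  · have hsingle : ∀ j ∈ Icc 1 (m - 1), θ ^ j *
        (if (i : ℤ) + l - j = k ∧ (k : ℤ) - i < m then c * θ ^ ((k : ℤ) - i).toNat else 0) =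
        if i + l - k = j then c * θ ^ l else 0 := fun j _ => by
      split_ifs
      · rw [mul_left_comm, ← pow_add]; congr 2; omega
      all_goals first | (exfalso; omega) | ring
    rw [sum_congr rfl hsingle, sum_ite_eq, if_pos (by simp only [mem_Icc]; omega), if_pos hlt]
  · rw [if_neg hlt]
    exact sum_eq_zero fun j hj => by
      rw [if_neg (by simp only [mem_Icc] at hj; omega), mul_zero]

lemma sum_Icc_pow_mul_ite_lag_add_ite_eq {θ c : ℝ} {i k l m : ℕ} (hik : i < k) (hlm : l < m) :
    ∑ j ∈ Icc 1 (m - 1), θ ^ j * (if (i : ℤ) + l = k ∧ (k : ℤ) - (i - j) < m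
        then c * θ ^ ((k : ℤ) - (i - j)).toNat else 0) +
      (if (i : ℤ) + l = k ∧ (k : ℤ) - i < m then c * θ ^ ((k : ℤ) - i).toNat else 0) =
      if i + l = k then c * θ ^ l * ∑ j ∈ range (m - l), θ ^ (2 * j) else 0 := by
  by_cases heq : i + l = k
  · subst heq
    have hterm : ∀ j ∈ Icc 1 (m - 1), θ ^ j * (if (i : ℤ) + l = ↑(i + l) ∧
        ((i + l : ℕ) : ℤ) - (i - j) < m then c * θ ^ (((i + l : ℕ) : ℤ) - (i - j)).toNat else 0) =
        if l + j < m then c * θ ^ l * θ ^ (2 * j) else 0 := fun j _ => by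
      split_ifs
      · rw [show (((i + l : ℕ) : ℤ) - (i - j)).toNat = l + j by omega]; ring
      all_goals first | (exfalso; omega) | ring
    have hfilter : (Icc 1 (m - 1)).filter (fun j => l + j < m) = Ico 1 (m - l) := by
      ext j; simp only [mem_filter, mem_Icc, mem_Ico]; omega
    rw [sum_congr rfl hterm, ← sum_filter, hfilter, if_pos ⟨by push_cast; ring, by omega⟩,
      show (((i + l : ℕ) : ℤ) - i).toNat = l by omega, if_pos rfl, range_eq_Ico,
      sum_eq_sum_Ico_succ_bot (a := 0) (by omega), ← mul_sum]
    ring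
  · have hne : ¬((i : ℤ) + l = k) := by omega
    simp [hne, heq]

lemma sum_Icc_pow_mul_ite_lags_eq {θ c : ℝ} {i k l m : ℕ} (hik : i < k) (hlm : l < m) :
    ∑ j ∈ Icc 1 (m - 1), θ ^ j *
        (if (i : ℤ) + l - j = k ∧ (k : ℤ) - i < m then c * θ ^ ((k : ℤ) - i).toNat else 0) +
      ∑ j ∈ Icc 1 (m - 1), θ ^ j * (if (i : ℤ) + l = k ∧ (k : ℤ) - (i - j) < m
        then c * θ ^ ((k : ℤ) - (i - j)).toNat else 0) +
      (if (i : ℤ) + l = k ∧ (k : ℤ) - i < m then c * θ ^ ((k : ℤ) - i).toNat else 0) =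
    c * θ ^ l * ((if k < i + l then 1 else 0) +
      (if i + l = k then 1 else 0) * ∑ j ∈ range (m - l), θ ^ (2 * j)) := by
  rw [add_assoc, sum_Icc_pow_mul_ite_lag_eq hik hlm, sum_Icc_pow_mul_ite_lag_add_ite_eq hik hlm]
  split_ifs <;> ring

theorem U_cross_covariance_zero_lag_second_general
    {Ω : Type*} [MeasureSpace Ω] [IsProbabilityMeasure (ℙ : Measure Ω)]
    (ξ : ℤ → Ω → ℝ)
    (hmeas : ∀ k, Measurable (ξ k))
    (hindep : iIndepFun ξ ℙ)
    (hident : ∀ k, IdentDistrib (ξ k) (ξ 0) ℙ ℙ)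
    (hcentered : 𝔼[ξ 0] = 0)
    (hL4 : MemLp (ξ 0) 4 ℙ)
    (θ : ℝ)
    (M m : ℕ) (hm : 2 * M < m)
    (U : ℕ → ℕ → Ω → ℝ)
    (hU : ∀ k l ω, U k l ω =
      ∑ j ∈ Finset.Icc 1 (m - 1), θ ^ j * ξ ((k : ℤ) + l - j) ω * ξ (k : ℤ) ω +
      ∑ j ∈ Finset.Icc 1 (m - 1), θ ^ j * ξ ((k : ℤ) + l) ω * ξ ((k : ℤ) - j) ω +
      ξ ((k : ℤ) + l) ω * ξ (k : ℤ) ω - θ ^ l * 𝔼[fun ω => (ξ 0 ω) ^ 2])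
    (l : ℕ) (hlM : l ≤ M)
    (i k : ℕ) (hik : i < k) :
    𝔼[fun ω => U k 0 ω * U i l ω] =
      2 * θ ^ l * (𝔼[fun ω => (ξ 0 ω) ^ 2]) ^ 2 *
        ((if k < i + l then (1 : ℝ) else 0) +
          (if i + l = k then (1 : ℝ) else 0) *
            ∑ j ∈ Finset.range (m - l), θ ^ (2 * j)) := by
  set v := 𝔼[fun ω => (ξ 0 ω) ^ 2]
  have hcent : ∀ a, ∫ ω, ξ a ω = 0 := fun a => (hident a).integral_eq.trans hcentered
  have hvar : ∀ a, ∫ ω, ξ a ω ^ 2 = v := fun a =>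
    ((hident a).comp (measurable_id.pow_const 2)).integral_eq
  have hL4' : ∀ a, MemLp (ξ a) 4 ℙ := fun a => (hident a).symm.memLp_snd hL4
  have hUlag : ∀ k l, U k l = lagStat ξ v θ m k l := fun k l => funext (hU k l)
  have hcross := fun (b : ℤ) (hb : b < k) =>
    integral_lagStat_zero_mul (θ := θ) (m := m) hmeas hindep hcent hvar hL4' hb
  simp only [hUlag]
  rw [integral_mul_lagStat hL4' (memLp_lagStat hL4' k 0),
    integral_lagStat_zero_eq_zero hmeas hindep hcent hvar hL4',
    sum_congr rfl fun j _ => congrArg (θ ^ j * ·) (hcross _ (by omega) _),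
    sum_congr rfl fun j _ => congrArg (θ ^ j * ·) (hcross _ (by omega) _),
    hcross _ (by omega), mul_zero, sub_zero, sum_Icc_pow_mul_ite_lags_eq hik (by omega)]
  ring

theorem U_cross_covariance_zero_lag_second
    {Ω : Type*} [MeasureSpace Ω] [IsProbabilityMeasure (ℙ : Measure Ω)]
    (ξ : ℤ → Ω → ℝ)
    (hmeas : ∀ k, Measurable (ξ k))
    (hindep : iIndepFun ξ ℙ)
    (hident : ∀ k, IdentDistrib (ξ k) (ξ 0) ℙ ℙ)
    (hcentered : 𝔼[ξ 0] = 0)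
    (hL4 : MemLp (ξ 0) 4 ℙ)
    (θ : ℝ) (hθ : θ ∈ Set.Ico (0 : ℝ) 1)
    (M m : ℕ) (hm : 2 * M < m)
    (U : ℕ → ℕ → Ω → ℝ)
    (hU : ∀ k l ω, U k l ω =
      ∑ j ∈ Finset.Icc 1 (m - 1), θ ^ j * ξ ((k : ℤ) + l - j) ω * ξ (k : ℤ) ω +
      ∑ j ∈ Finset.Icc 1 (m - 1), θ ^ j * ξ ((k : ℤ) + l) ω * ξ ((k : ℤ) - j) ω +
      ξ ((k : ℤ) + l) ω * ξ (k : ℤ) ω - θ ^ l * 𝔼[fun ω => (ξ 0 ω) ^ 2])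
    (l : ℕ) (hl1 : 1 ≤ l) (hlM : l ≤ M)
    (i k : ℕ) (hi : 1 ≤ i) (hik : i < k) :
    𝔼[fun ω => U k 0 ω * U i l ω] =
      2 * θ ^ l * (𝔼[fun ω => (ξ 0 ω) ^ 2]) ^ 2 *
        ((if k < i + l then (1 : ℝ) else 0) +
          (if i + l = k then (1 : ℝ) else 0) *
            ∑ j ∈ Finset.range (m - l), θ ^ (2 * j)) :=
  U_cross_covariance_zero_lag_second_general ξ hmeas hindep hident hcentered hL4 θ M m hm U hU l hlM
    i k hik
end

section
/- For integers 1 ≤ i < k and 0 < l < q ≤ M, E(U_{i,l,m,n} U_{k,q,m,n}) = θ_n^{l+q} (E ξ_0²)² · ( 1_{A₁} + 1_{A₂} Σ_{j=0}^{m−1−(l+q)} θ_n^{2j} ), where A₁ denotes the condition i + l > k and A₂ the condition i + l = k. -/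
open MeasureTheory ProbabilityTheory Finset

/-!
Write `Q k l = ∑_{t<m} θ^t ξ_{k+l-t} ξ_k + ∑_{1≤j<m} θ^j ξ_{k+l} ξ_{k-j}`, so that
`U k l = Q k l - 𝔼 Q k l` and the left side is `cov(Q i l, Q k q)`. By bilinearity this is a double
sum of covariances `cov(ξ_a ξ_b, ξ_c ξ_d)`; for i.i.d. centred variables such a covariance is `σ⁴`
times the number of ways to match `{a, b}` with `{c, d}`, as long as the four indices do not all
coincide, which `i ≠ k` rules out. Counting matchings: the first sums of the two forms match once
(at `t = i + l - k`, `t' = k + q - i`) exactly when `k ≤ i + l`; the second sum of `Q i l` matches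
the first sum of `Q k q` once for each `j ≥ 1` with `l + q + j < m` exactly when `i + l = k`; no
other pair of sums ever matches.
-/

theorem Finset.sum_sum_eq_single_of_mem {ι κ M : Type*} [AddCommMonoid M] {s : Finset ι}
    {t : Finset κ} {f : ι → κ → M} {x₀ : ι} {y₀ : κ} (hx₀ : x₀ ∈ s) (hy₀ : y₀ ∈ t)
    (h : ∀ x ∈ s, ∀ y ∈ t, ¬(x = x₀ ∧ y = y₀) → f x y = 0) :
    ∑ x ∈ s, ∑ y ∈ t, f x y = f x₀ y₀ := by
  rw [← sum_product']
  exact sum_eq_single_of_mem (x₀, y₀) (mem_product.2 ⟨hx₀, hy₀⟩) fun p hp hne =>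
    h p.1 (mem_product.1 hp).1 p.2 (mem_product.1 hp).2 fun heq => hne (Prod.ext heq.1 heq.2)

theorem covariance_add_add {Ω : Type*} [MeasurableSpace Ω] {μ : Measure Ω} [IsFiniteMeasure μ]
    {X₁ X₂ Y₁ Y₂ : Ω → ℝ} (hX₁ : MemLp X₁ 2 μ) (hX₂ : MemLp X₂ 2 μ) (hY₁ : MemLp Y₁ 2 μ)
    (hY₂ : MemLp Y₂ 2 μ) :
    cov[X₁ + X₂, Y₁ + Y₂; μ] =
      cov[X₁, Y₁; μ] + cov[X₁, Y₂; μ] + cov[X₂, Y₁; μ] + cov[X₂, Y₂; μ] := by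
  rw [covariance_add_left hX₁ hX₂ (hY₁.add hY₂), covariance_add_right hX₁ hY₁ hY₂,
    covariance_add_right hX₂ hY₁ hY₂]
  ring

def crossPairings {ι : Type*} [DecidableEq ι] (a b c d : ι) : ℝ :=
  (if a = c ∧ b = d then 1 else 0) + (if a = d ∧ b = c then 1 else 0)

theorem crossPairings_eq_zero {ι : Type*} [DecidableEq ι] {a b c d : ι}
    (h₁ : ¬(a = c ∧ b = d)) (h₂ : ¬(a = d ∧ b = c)) : crossPairings a b c d = 0 := by
  simp [crossPairings, h₁, h₂]

structure IsIIDCenteredL4 {Ω ι : Type*} [MeasureSpace Ω] (ξ : ι → Ω → ℝ) (X : Ω → ℝ) : Prop where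
  measurable : ∀ i, Measurable (ξ i)
  indep : iIndepFun ξ ℙ
  identDistrib : ∀ i, IdentDistrib (ξ i) X ℙ ℙ
  integral_eq_zero : 𝔼[X] = 0
  memLp_four : MemLp X 4 ℙ

namespace IsIIDCenteredL4

variable {Ω ι : Type*} [MeasureSpace Ω] {ξ : ι → Ω → ℝ} {X : Ω → ℝ} (hξ : IsIIDCenteredL4 ξ X)
include hξ

theorem integral_apply_eq_zero (i : ι) : ∫ ω, ξ i ω = 0 :=
  (hξ.identDistrib i).integral_eq.trans hξ.integral_eq_zero

theorem integral_mul_self (i : ι) : ∫ ω, ξ i ω * ξ i ω = ∫ ω, X ω ^ 2 := by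
  simpa only [Function.comp_def, sq] using
    ((hξ.identDistrib i).comp (u := fun x : ℝ => x * x) (by fun_prop)).integral_eq

theorem memLp_mul (i j : ι) : MemLp (fun ω => ξ i ω * ξ j ω) 2 ℙ := by
  have : ENNReal.HolderTriple 4 4 2 := ⟨by
    rw [← ENNReal.toReal_eq_toReal_iff' (by simp) (by simp)]; simp [ENNReal.toReal_add]; norm_num⟩
  exact ((hξ.identDistrib j).symm.memLp_snd hξ.memLp_four).mul'
    ((hξ.identDistrib i).symm.memLp_snd hξ.memLp_four)

theorem integral_mul_self_mul_mul_self {i j : ι} (h : i ≠ j) :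
    ∫ ω, ξ i ω * ξ i ω * ξ j ω * ξ j ω = (∫ ω, X ω ^ 2) ^ 2 := by
  have hmeas := hξ.measurable
  have hind := hξ.indep.indepFun_mul_mul hmeas i i j j h h h h
  have h := hind.integral_mul_eq_mul_integral (by fun_prop) (by fun_prop)
  simp only [Pi.mul_apply, ← mul_assoc] at h
  rw [h, hξ.integral_mul_self, hξ.integral_mul_self, sq]

variable {κ κ' : Type*}

theorem memLp_sum_mul (s : Finset κ) (c : κ → ℝ) (a b : κ → ι) :
    MemLp (fun ω => ∑ x ∈ s, c x * (ξ (a x) ω * ξ (b x) ω)) 2 ℙ :=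
  memLp_finsetSum s fun x _ => (hξ.memLp_mul (a x) (b x)).const_mul (c x)

variable [DecidableEq ι]

theorem integral_mul (i j : ι) :
    ∫ ω, ξ i ω * ξ j ω = if i = j then ∫ ω, X ω ^ 2 else 0 := by
  split_ifs with h
  · exact h ▸ hξ.integral_mul_self i
  · rw [(hξ.indep.indepFun h).integral_fun_mul_eq_mul_integral
      (hξ.measurable i).aestronglyMeasurable (hξ.measurable j).aestronglyMeasurable,
      hξ.integral_apply_eq_zero, zero_mul]

theorem integral_mul_mul_mul_eq_zero {i j k l : ι} (hj : i ≠ j) (hk : i ≠ k) (hl : i ≠ l) :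
    ∫ ω, ξ i ω * ξ j ω * ξ k ω * ξ l ω = 0 := by
  have hST : Disjoint ({i} : Finset ι) {j, k, l} := by simp [hj, hk, hl]
  have hmeas := hξ.measurable
  have hind : IndepFun (ξ i) (fun ω => ξ j ω * ξ k ω * ξ l ω) ℙ :=
    (hξ.indep.indepFun_finset _ _ hST hmeas).comp
    (φ := fun v : ({i} : Finset ι) → ℝ => v ⟨i, mem_singleton_self i⟩)
    (ψ := fun v : ({j, k, l} : Finset ι) → ℝ =>
      v ⟨j, by simp⟩ * v ⟨k, by simp⟩ * v ⟨l, by simp⟩)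
    (measurable_pi_apply _) (by fun_prop)
  calc ∫ ω, ξ i ω * ξ j ω * ξ k ω * ξ l ω = ∫ ω, ξ i ω * (ξ j ω * ξ k ω * ξ l ω) := by
        simp only [mul_assoc]
    _ = 0 := by
      rw [hind.integral_fun_mul_eq_mul_integral (by fun_prop) (by fun_prop),
        hξ.integral_apply_eq_zero, zero_mul]

theorem integral_mul_mul_mul (i j k l : ι) (h : ¬(i = j ∧ j = k ∧ k = l)) :
    ∫ ω, ξ i ω * ξ j ω * ξ k ω * ξ l ω =
      (∫ ω, X ω ^ 2) ^ 2 * ((if i = j ∧ k = l then 1 else 0) + crossPairings i j k l) := by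
  have lone : ∀ {a b c d : ι}, a ≠ b → a ≠ c → a ≠ d →
      (∀ ω, ξ i ω * ξ j ω * ξ k ω * ξ l ω = ξ a ω * ξ b ω * ξ c ω * ξ d ω) →
      ∫ ω, ξ i ω * ξ j ω * ξ k ω * ξ l ω = 0 := fun hb hc hd hperm => by
    simp_rw [hperm]; exact hξ.integral_mul_mul_mul_eq_zero hb hc hd
  have pair : ∀ {a b : ι}, a ≠ b →
      (∀ ω, ξ i ω * ξ j ω * ξ k ω * ξ l ω = ξ a ω * ξ a ω * ξ b ω * ξ b ω) →
      ∫ ω, ξ i ω * ξ j ω * ξ k ω * ξ l ω = (∫ ω, X ω ^ 2) ^ 2 := fun hab hperm => by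
    simp_rw [hperm]; exact hξ.integral_mul_self_mul_mul_self hab
  -- Either some index occurs only once, or the indices form two distinct pairs.
  by_cases hi : i ≠ j ∧ i ≠ k ∧ i ≠ l
  · rw [lone hi.1 hi.2.1 hi.2.2 fun _ => rfl]; simp only [crossPairings]; grind
  by_cases hj : j ≠ i ∧ j ≠ k ∧ j ≠ l
  · rw [lone hj.1 hj.2.1 hj.2.2 fun _ => by ring]; simp only [crossPairings]; grind
  by_cases hk : k ≠ i ∧ k ≠ j ∧ k ≠ l
  · rw [lone hk.1 hk.2.1 hk.2.2 fun _ => by ring]; simp only [crossPairings]; grind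
  by_cases hl : l ≠ i ∧ l ≠ j ∧ l ≠ k
  · rw [lone hl.1 hl.2.1 hl.2.2 fun _ => by ring]; simp only [crossPairings]; grind
  obtain ⟨rfl, rfl, hne⟩ | ⟨rfl, rfl, hne⟩ | ⟨rfl, rfl, hne⟩ :
      (i = j ∧ k = l ∧ i ≠ k) ∨ (i = k ∧ j = l ∧ i ≠ j) ∨ (i = l ∧ j = k ∧ i ≠ j) := by grind
  · rw [pair hne fun _ => rfl]; simp [crossPairings, hne]
  · rw [pair hne fun _ => by ring]; simp [crossPairings, hne]
  · rw [pair hne fun _ => by ring]; simp [crossPairings, hne]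

variable [IsProbabilityMeasure (ℙ : Measure Ω)]

theorem covariance_mul_mul {i j k l : ι} (h : ¬(i = j ∧ j = k ∧ k = l)) :
    cov[fun ω => ξ i ω * ξ j ω, fun ω => ξ k ω * ξ l ω] =
      (∫ ω, X ω ^ 2) ^ 2 * crossPairings i j k l := by
  rw [covariance_eq_sub (hξ.memLp_mul i j) (hξ.memLp_mul k l)]
  simp only [Pi.mul_apply, ← mul_assoc]
  rw [hξ.integral_mul_mul_mul i j k l h, hξ.integral_mul, hξ.integral_mul, ite_and]
  split_ifs <;> ring

theorem integral_sum_mul (s : Finset κ) (c : κ → ℝ) (a b : κ → ι) :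
    ∫ ω, ∑ x ∈ s, c x * (ξ (a x) ω * ξ (b x) ω) =
      (∫ ω, X ω ^ 2) * ∑ x ∈ s, c x * (if a x = b x then 1 else 0) := by
  rw [integral_finsetSum s fun x _ =>
    ((hξ.memLp_mul (a x) (b x)).integrable one_le_two).const_mul (c x), mul_sum]
  refine sum_congr rfl fun x _ => ?_
  rw [integral_const_mul, hξ.integral_mul]
  split_ifs <;> ring

theorem covariance_sum_mul (s : Finset κ) (t : Finset κ') (c : κ → ℝ) (a b : κ → ι)
    (c' : κ' → ℝ) (a' b' : κ' → ι)
    (h : ∀ x ∈ s, ∀ y ∈ t, ¬(a x = b x ∧ b x = a' y ∧ a' y = b' y)) :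
    cov[fun ω => ∑ x ∈ s, c x * (ξ (a x) ω * ξ (b x) ω),
        fun ω => ∑ y ∈ t, c' y * (ξ (a' y) ω * ξ (b' y) ω)] =
      (∫ ω, X ω ^ 2) ^ 2 *
        ∑ x ∈ s, ∑ y ∈ t, c x * c' y * crossPairings (a x) (b x) (a' y) (b' y) := by
  rw [covariance_fun_sum_fun_sum' (fun x _ => (hξ.memLp_mul (a x) (b x)).const_mul (c x))
    (fun y _ => (hξ.memLp_mul (a' y) (b' y)).const_mul (c' y)), mul_sum]
  refine sum_congr rfl fun x hx => ?_
  rw [mul_sum]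
  refine sum_congr rfl fun y hy => ?_
  rw [covariance_const_mul_left, covariance_const_mul_right, hξ.covariance_mul_mul (h x hx y hy)]
  ring

end IsIIDCenteredL4

theorem IsIIDCenteredL4.integral_lagSums {Ω : Type*} [MeasureSpace Ω]
    [IsProbabilityMeasure (ℙ : Measure Ω)] {ξ : ℤ → Ω → ℝ} {X : Ω → ℝ} (hξ : IsIIDCenteredL4 ξ X)
    (θ : ℝ) {m r s : ℕ} (hs : s < m) :
    ∫ ω, (∑ t ∈ range m, θ ^ t * (ξ (r + s - t) ω * ξ r ω) +
      ∑ j ∈ Icc 1 (m - 1), θ ^ j * (ξ (r + s) ω * ξ (r - j) ω)) = θ ^ s * ∫ ω, X ω ^ 2 := by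
  rw [integral_add ((hξ.memLp_sum_mul _ _ _ _).integrable one_le_two)
    ((hξ.memLp_sum_mul _ _ _ _).integrable one_le_two), hξ.integral_sum_mul, hξ.integral_sum_mul,
    sum_eq_single_of_mem s (mem_range.2 hs) fun t _ hts => by rw [if_neg (by omega), mul_zero],
    sum_eq_zero fun j hj => by rw [mem_Icc] at hj; rw [if_neg (by omega), mul_zero],
    if_pos (by ring)]
  ring

section LagSums

variable (θ : ℝ) {m i k l q : ℕ}

theorem sum_range_sum_range_crossPairings (hik : i < k) (hlqm : l + q < m) :
    ∑ t ∈ range m, ∑ t' ∈ range m,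
      θ ^ t * θ ^ t' * crossPairings ((i : ℤ) + l - t) i ((k : ℤ) + q - t') k =
      if k ≤ i + l then θ ^ (l + q) else 0 := by
  split_ifs with hkil
  · rw [Finset.sum_sum_eq_single_of_mem (x₀ := i + l - k) (y₀ := k + q - i)
      (mem_range.2 (by omega)) (mem_range.2 (by omega))]
    · rw [crossPairings, if_neg (by omega), if_pos (by omega), zero_add, mul_one, ← pow_add]
      congr 1; omega
    · intro t _ t' _ hne
      rw [crossPairings_eq_zero (by omega) (by omega), mul_zero]
  · exact sum_eq_zero fun t _ => sum_eq_zero fun t' _ => by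
      rw [crossPairings_eq_zero (by omega) (by omega), mul_zero]

theorem sum_range_sum_Icc_crossPairings (hik : i < k) (hlq : l ≤ q) :
    ∑ t ∈ range m, ∑ j ∈ Icc 1 (m - 1),
      θ ^ t * θ ^ j * crossPairings ((i : ℤ) + l - t) i ((k : ℤ) + q) (k - j) = 0 :=
  sum_eq_zero fun t _ => sum_eq_zero fun j hj => by
    rw [mem_Icc] at hj
    rw [crossPairings_eq_zero (by omega) (by omega), mul_zero]

theorem sum_Icc_sum_range_crossPairings (hik : i < k) :
    ∑ j ∈ Icc 1 (m - 1), ∑ t ∈ range m,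
      θ ^ j * θ ^ t * crossPairings ((i : ℤ) + l) (i - j) ((k : ℤ) + q - t) k =
      if i + l = k then θ ^ (l + q) * ∑ j ∈ Ico 1 (m - (l + q)), θ ^ (2 * j) else 0 := by
  split_ifs with hk
  · have hterm : ∀ j ∈ Icc 1 (m - 1), ∀ t ∈ range m,
        θ ^ j * θ ^ t * crossPairings ((i : ℤ) + l) (i - j) ((k : ℤ) + q - t) k =
          if l + q + j = t then θ ^ (l + q) * θ ^ (2 * j) else 0 := by
      intro j hj t _
      rw [mem_Icc] at hj
      rw [crossPairings, if_neg (by omega)]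
      by_cases ht : l + q + j = t
      · rw [if_pos (by omega), if_pos ht, ← ht]; ring
      · rw [if_neg (by omega), if_neg ht]; ring
    have hfilter : {j ∈ Icc 1 (m - 1) | l + q + j ∈ range m} = Ico 1 (m - (l + q)) := by
      ext j; simp only [mem_filter, mem_Icc, mem_range, mem_Ico]; omega
    rw [sum_congr rfl fun j hj => sum_congr rfl (hterm j hj)]
    simp only [sum_ite_eq, ← sum_filter, hfilter, mul_sum]
  · exact sum_eq_zero fun j _ => sum_eq_zero fun t _ => by
      rw [crossPairings_eq_zero (by omega) (by omega), mul_zero]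

theorem sum_Icc_sum_Icc_crossPairings (hik : i < k) (hlq : l ≤ q) :
    ∑ j ∈ Icc 1 (m - 1), ∑ j' ∈ Icc 1 (m - 1),
      θ ^ j * θ ^ j' * crossPairings ((i : ℤ) + l) (i - j) ((k : ℤ) + q) (k - j') = 0 :=
  sum_eq_zero fun j _ => sum_eq_zero fun j' hj' => by
    rw [mem_Icc] at hj'
    rw [crossPairings_eq_zero (by omega) (by omega), mul_zero]

end LagSums

theorem U_cross_covariance_increasing_lags_general
    {Ω : Type*} [MeasureSpace Ω] [IsProbabilityMeasure (ℙ : Measure Ω)]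
    (ξ : ℤ → Ω → ℝ)
    (hmeas : ∀ k, Measurable (ξ k))
    (hindep : iIndepFun ξ ℙ)
    (hident : ∀ k, IdentDistrib (ξ k) (ξ 0) ℙ ℙ)
    (hcentered : 𝔼[ξ 0] = 0)
    (hL4 : MemLp (ξ 0) 4 ℙ)
    (θ : ℝ)
    (M m : ℕ) (hm : 2 * M < m)
    (U : ℕ → ℕ → Ω → ℝ)
    (hU : ∀ k l ω, U k l ω =
      ∑ j ∈ Finset.Icc 1 (m - 1), θ ^ j * ξ ((k : ℤ) + l - j) ω * ξ (k : ℤ) ω +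
      ∑ j ∈ Finset.Icc 1 (m - 1), θ ^ j * ξ ((k : ℤ) + l) ω * ξ ((k : ℤ) - j) ω +
      ξ ((k : ℤ) + l) ω * ξ (k : ℤ) ω - θ ^ l * 𝔼[fun ω => (ξ 0 ω) ^ 2])
    (l q : ℕ) (hlq : l < q) (hqM : q ≤ M)
    (i k : ℕ) (hik : i < k) :
    𝔼[fun ω => U i l ω * U k q ω] =
      θ ^ (l + q) * (𝔼[fun ω => (ξ 0 ω) ^ 2]) ^ 2 *
        ((if k < i + l then (1 : ℝ) else 0) +
          (if i + l = k then (1 : ℝ) else 0) *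
            ∑ j ∈ Finset.range (m - (l + q)), θ ^ (2 * j)) := by
  have hξ : IsIIDCenteredL4 ξ (ξ 0) := ⟨hmeas, hindep, hident, hcentered, hL4⟩
  set A : ℕ → ℕ → Ω → ℝ := fun r s ω => ∑ t ∈ range m, θ ^ t * (ξ (r + s - t) ω * ξ r ω)
  set B : ℕ → ℕ → Ω → ℝ := fun r s ω =>
    ∑ j ∈ Icc 1 (m - 1), θ ^ j * (ξ (r + s) ω * ξ (r - j) ω)
  have hcentred : ∀ r s, s < m → U r s = fun ω => (A r s + B r s) ω - 𝔼[A r s + B r s] := by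
    intro r s hs
    ext ω
    have hIcc : Icc 1 (m - 1) = Ico 1 m := by ext; simp; omega
    simp only [A, B, Pi.add_apply]
    rw [hU, hξ.integral_lagSums θ hs, sum_range_eq_add_Ico _ (by omega), ← hIcc]
    simp only [pow_zero, Nat.cast_zero, sub_zero, one_mul, mul_assoc]
    ring
  rw [hcentred i l (by omega), hcentred k q (by omega)]
  change cov[A i l + B i l, A k q + B k q] = _
  rw [covariance_add_add (hξ.memLp_sum_mul _ _ _ _) (hξ.memLp_sum_mul _ _ _ _)
    (hξ.memLp_sum_mul _ _ _ _) (hξ.memLp_sum_mul _ _ _ _), hξ.covariance_sum_mul,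
    hξ.covariance_sum_mul, hξ.covariance_sum_mul, hξ.covariance_sum_mul]
  rw [sum_range_sum_range_crossPairings θ hik (by omega),
    sum_range_sum_Icc_crossPairings θ hik hlq.le, sum_Icc_sum_range_crossPairings θ hik,
    sum_Icc_sum_Icc_crossPairings θ hik hlq.le,
    sum_range_eq_add_Ico _ (by omega : 0 < m - (l + q))]
  split_ifs <;> first | omega | ring
  -- the side conditions of `covariance_sum_mul`: the four indices never all coincide
  all_goals
    intro x hx y hy
    simp only [mem_range, mem_Icc] at hx hy
    omega

theorem U_cross_covariance_increasing_lags
    {Ω : Type*} [MeasureSpace Ω] [IsProbabilityMeasure (ℙ : Measure Ω)]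
    (ξ : ℤ → Ω → ℝ)
    (hmeas : ∀ k, Measurable (ξ k))
    (hindep : iIndepFun ξ ℙ)
    (hident : ∀ k, IdentDistrib (ξ k) (ξ 0) ℙ ℙ)
    (hcentered : 𝔼[ξ 0] = 0)
    (hL4 : MemLp (ξ 0) 4 ℙ)
    (θ : ℝ) (hθ : θ ∈ Set.Ico (0 : ℝ) 1)
    (M m : ℕ) (hm : 2 * M < m)
    (U : ℕ → ℕ → Ω → ℝ)
    (hU : ∀ k l ω, U k l ω =
      ∑ j ∈ Finset.Icc 1 (m - 1), θ ^ j * ξ ((k : ℤ) + l - j) ω * ξ (k : ℤ) ω +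
      ∑ j ∈ Finset.Icc 1 (m - 1), θ ^ j * ξ ((k : ℤ) + l) ω * ξ ((k : ℤ) - j) ω +
      ξ ((k : ℤ) + l) ω * ξ (k : ℤ) ω - θ ^ l * 𝔼[fun ω => (ξ 0 ω) ^ 2])
    (l q : ℕ) (hl : 0 < l) (hlq : l < q) (hqM : q ≤ M)
    (i k : ℕ) (hi : 1 ≤ i) (hik : i < k) :
    𝔼[fun ω => U i l ω * U k q ω] =
      θ ^ (l + q) * (𝔼[fun ω => (ξ 0 ω) ^ 2]) ^ 2 *
        ((if k < i + l then (1 : ℝ) else 0) +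
          (if i + l = k then (1 : ℝ) else 0) *
            ∑ j ∈ Finset.range (m - (l + q)), θ ^ (2 * j)) :=
  U_cross_covariance_increasing_lags_general ξ hmeas hindep hident hcentered hL4 θ M m hm U hU l q
    hlq hqM i k hik
end

section
/- For any i ≥ 1 and 0 ≤ l, q ≤ M the following equal-index covariances hold: (1) if 0 < l < q, E(U_{i,l,m,n} U_{i,q,m,n}) = θ_n^{l+q} E ξ_0⁴ − 2 θ_n^{l+q} (E ξ_0²)² + θ_n^{q−l} (E ξ_0²)² Σ_{j=0}^{m−1−(q−l)} θ_n^{2j}; (2) if 0 < q < l, E(U_{i,l,m,n} U_{i,q,m,n}) = θ_n^{l+q} E ξ_0⁴ − 2 θ_n^{l+q} (E ξ_0²)² + θ_n^{l−q} (E ξ_0²)² Σ_{p=0}^{m−1−(l−q)} θ_n^{2p}; (3) if l = q ≠ 0, E(U_{i,l,m,n}²) = θ_n^{2l} E ξ_0⁴ − 2 θ_n^{2l} (E ξ_0²)² + (E ξ_0²)² (2 Σ_{j=1}^{m−1} θ_n^{2j} + 1); (4) if q > 0, E(U_{i,0,m,n} U_{i,q,m,n}) = θ_n^q E ξ_0⁴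 − θ_n^q (E ξ_0²)² + 2 (E ξ_0²)² θ_n^q Σ_{j=1}^{m−1−q} θ_n^{2j}. -/
/-!
For independent centred `ξ_k` with common second and fourth moments, `E[ξ_a ξ_b ξ_c ξ_d]` is
`E ξ⁴` when all four indices agree, `(E ξ²)²` when they split into two pairs of distinct values,
and `0` as soon as some index occurs only once. Writing `U_{i,l} = Z_l - E Z_l` with the quadratic
form `Z_l = ∑_{j<m} θ^j ξ_{i+l-j} ξ_i + ∑_{1≤j<m} θ^j ξ_{i+l} ξ_{i-j}`, the covariance
`E[Z_l Z_q] - E Z_l E Z_q` is a double sum of such moments. What survives is the term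
`j = l, j' = q` (all four indices equal to `i`), the pairings along the shifted diagonal
`j' = j + (q - l)`, and, when `l = 0` or `l = q`, one further diagonal; these diagonals give the
geometric sums in `θ²`.
-/

open MeasureTheory ProbabilityTheory Finset

section FourthMoments

variable {ι Ω : Type*} {mΩ : MeasurableSpace Ω} {μ : Measure Ω} {ξ : ι → Ω → ℝ} {s2 s4 : ℝ}

def fourthMixedMoment [DecidableEq ι] (s2 s4 : ℝ) (a b c d : ι) : ℝ :=
  if a = b ∧ b = c ∧ c = d then s4
  else if a = b ∧ c = d ∨ a = c ∧ b = d ∨ a = d ∧ b = c then s2 ^ 2 else 0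

lemma integral_mul_of_ne (hmeas : ∀ k, Measurable (ξ k)) (hindep : iIndepFun ξ μ)
    (hcenter : ∀ k, μ[ξ k] = 0) {a b : ι} (hab : a ≠ b) :
    μ[fun ω => ξ a ω * ξ b ω] = 0 := by
  rw [(hindep.indepFun hab).integral_fun_mul_eq_mul_integral (hmeas a).aestronglyMeasurable
    (hmeas b).aestronglyMeasurable, hcenter, zero_mul]

lemma integral_mul_mul_mul_of_ne [DecidableEq ι] [IsProbabilityMeasure μ]
    (hmeas : ∀ k, Measurable (ξ k)) (hindep : iIndepFun ξ μ) (hcenter : ∀ k, μ[ξ k] = 0)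
    {a b c d : ι} (hb : a ≠ b) (hc : a ≠ c) (hd : a ≠ d) :
    μ[fun ω => ξ a ω * ξ b ω * ξ c ω * ξ d ω] = 0 := by
  have hind : IndepFun (ξ a) (fun ω => ξ b ω * (ξ c ω * ξ d ω)) μ := by
    have h := hindep.indepFun_finset {a} {b, c, d} (by simpa using ⟨hb, hc, hd⟩) hmeas
    exact h.comp (measurable_pi_apply (⟨a, mem_singleton_self a⟩ : ({a} : Finset ι)))
      (ψ := fun y => y ⟨b, mem_insert_self b _⟩ *
        (y ⟨c, mem_insert_of_mem (mem_insert_self c _)⟩ *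
          y ⟨d, mem_insert_of_mem (mem_insert_of_mem (mem_singleton_self d))⟩))
      (by fun_prop)
  simp_rw [mul_assoc]
  rw [hind.integral_fun_mul_eq_mul_integral (hmeas a).aestronglyMeasurable
    ((hmeas b).mul ((hmeas c).mul (hmeas d))).aestronglyMeasurable, hcenter, zero_mul]

lemma integral_sq_mul_sq_of_ne (hmeas : ∀ k, Measurable (ξ k)) (hindep : iIndepFun ξ μ)
    (h2 : ∀ k, μ[fun ω => ξ k ω ^ 2] = s2) {a b : ι} (hab : a ≠ b) :
    μ[fun ω => ξ a ω ^ 2 * ξ b ω ^ 2] = s2 ^ 2 := by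
  have h := ((hindep.indepFun hab).comp (measurable_id.pow_const 2)
    (measurable_id.pow_const 2)).integral_fun_mul_eq_mul_integral
    ((hmeas a).pow_const 2).aestronglyMeasurable ((hmeas b).pow_const 2).aestronglyMeasurable
  simp only [Function.comp_def, id] at h
  rw [h, h2, h2, sq]

lemma integral_mul_mul_mul_eq_fourthMixedMoment [DecidableEq ι] [IsProbabilityMeasure μ]
    (hmeas : ∀ k, Measurable (ξ k)) (hindep : iIndepFun ξ μ) (hcenter : ∀ k, μ[ξ k] = 0)
    (h2 : ∀ k, μ[fun ω => ξ k ω ^ 2] = s2) (h4 : ∀ k, μ[fun ω => ξ k ω ^ 4] = s4) (a b c d : ι) :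
    μ[fun ω => ξ a ω * ξ b ω * ξ c ω * ξ d ω] = fourthMixedMoment s2 s4 a b c d := by
  unfold fourthMixedMoment
  split_ifs with hall hpair
  · obtain ⟨rfl, rfl, rfl⟩ := hall
    simpa only [pow_succ, pow_zero, one_mul] using h4 a
  · rcases hpair with ⟨rfl, rfl⟩ | ⟨rfl, rfl⟩ | ⟨rfl, rfl⟩
    · rw [← integral_sq_mul_sq_of_ne hmeas hindep h2 (a := a) (b := c)
        (by rintro rfl; simp at hall)]
      congr with ω
      ring
    all_goals
      rw [← integral_sq_mul_sq_of_ne hmeas hindep h2 (a := a) (b := b)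
        (by rintro rfl; simp at hall)]
      congr with ω
      ring
  · obtain ⟨hb, hc, hd⟩ | ⟨hb, hc, hd⟩ | ⟨hb, hc, hd⟩ | ⟨hb, hc, hd⟩ :
        (a ≠ b ∧ a ≠ c ∧ a ≠ d) ∨ (b ≠ a ∧ b ≠ c ∧ b ≠ d) ∨ (c ≠ a ∧ c ≠ b ∧ c ≠ d) ∨
          (d ≠ a ∧ d ≠ b ∧ d ≠ c) := by grind
    all_goals
      refine (integral_congr_ae (.of_forall fun ω => ?_)).trans
        (integral_mul_mul_mul_of_ne hmeas hindep hcenter hb hc hd)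
      ring

lemma memLp_two_mul_of_memLp_four {f g : Ω → ℝ} (hf : MemLp f 4 μ) (hg : MemLp g 4 μ) :
    MemLp (f * g) 2 μ :=
  hg.mul hf (hpqr := ⟨by
    rw [← ENNReal.toReal_eq_toReal_iff' (by simp) (by simp)]
    norm_num [ENNReal.toReal_add]⟩)

def quadForm (ξ : ι → Ω → ℝ) {κ : Type*} (s : Finset κ) (c : κ → ℝ) (a b : κ → ι) : Ω → ℝ :=
  fun ω => ∑ j ∈ s, c j * ξ (a j) ω * ξ (b j) ω

variable {κ κ' : Type*} {s : Finset κ} {t : Finset κ'} {c : κ → ℝ} {c' : κ' → ℝ}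
  {a b : κ → ι} {a' b' : κ' → ι}

lemma memLp_quadForm [IsProbabilityMeasure μ] (hmem : ∀ k, MemLp (ξ k) 4 μ) :
    MemLp (quadForm ξ s c a b) 2 μ :=
  memLp_finsetSum s fun j _ => by
    simpa only [mul_assoc, Pi.mul_apply] using
      (memLp_two_mul_of_memLp_four (hmem (a j)) (hmem (b j))).const_mul (c j)

lemma integral_quadForm [IsProbabilityMeasure μ] [DecidableEq ι]
    (hmeas : ∀ k, Measurable (ξ k)) (hindep : iIndepFun ξ μ) (hcenter : ∀ k, μ[ξ k] = 0)
    (h2 : ∀ k, μ[fun ω => ξ k ω ^ 2] = s2) (hmem : ∀ k, MemLp (ξ k) 4 μ) :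
    μ[quadForm ξ s c a b] = ∑ j ∈ s, c j * if a j = b j then s2 else 0 := by
  have hint : ∀ j, Integrable (fun ω => ξ (a j) ω * ξ (b j) ω) μ := fun j =>
    (memLp_two_mul_of_memLp_four (hmem (a j)) (hmem (b j))).integrable (by norm_num)
  unfold quadForm
  rw [integral_finsetSum s fun j _ => by simpa only [mul_assoc] using (hint j).const_mul (c j)]
  refine sum_congr rfl fun j _ => ?_
  simp_rw [mul_assoc]
  rw [integral_const_mul]
  split_ifs with hab
  · simp only [hab, ← sq, h2]
  · rw [integral_mul_of_ne hmeas hindep hcenter hab]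

lemma integral_quadForm_mul_quadForm [IsProbabilityMeasure μ] [DecidableEq ι]
    (hmeas : ∀ k, Measurable (ξ k)) (hindep : iIndepFun ξ μ) (hcenter : ∀ k, μ[ξ k] = 0)
    (h2 : ∀ k, μ[fun ω => ξ k ω ^ 2] = s2) (h4 : ∀ k, μ[fun ω => ξ k ω ^ 4] = s4)
    (hmem : ∀ k, MemLp (ξ k) 4 μ) :
    μ[quadForm ξ s c a b * quadForm ξ t c' a' b'] =
      ∑ j ∈ s, ∑ k ∈ t, c j * c' k * fourthMixedMoment s2 s4 (a j) (b j) (a' k) (b' k) := by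
  have hint : ∀ j k, Integrable
      (fun ω => ξ (a j) ω * ξ (b j) ω * ξ (a' k) ω * ξ (b' k) ω) μ := fun j k => by
    refine ((memLp_two_mul_of_memLp_four (hmem (a j)) (hmem (b j))).integrable_mul
      (memLp_two_mul_of_memLp_four (hmem (a' k)) (hmem (b' k)))).congr
        (.of_forall fun ω => ?_)
    simp only [Pi.mul_apply, mul_assoc]
  have hexpand : quadForm ξ s c a b * quadForm ξ t c' a' b' = fun ω => ∑ j ∈ s, ∑ k ∈ t,
      c j * c' k * (ξ (a j) ω * ξ (b j) ω * ξ (a' k) ω * ξ (b' k) ω) := by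
    ext ω
    simp only [quadForm, Pi.mul_apply, sum_mul_sum]
    exact sum_congr rfl fun j _ => sum_congr rfl fun k _ => by ring
  rw [hexpand, integral_finsetSum s fun j _ =>
    integrable_finsetSum t fun k _ => (hint j k).const_mul _]
  refine sum_congr rfl fun j _ => ?_
  rw [integral_finsetSum t fun k _ => (hint j k).const_mul _]
  refine sum_congr rfl fun k _ => ?_
  rw [integral_const_mul, integral_mul_mul_mul_eq_fourthMixedMoment hmeas hindep hcenter h2 h4]

end FourthMoments

section LagCovariances

variable {Ω : Type*} {mΩ : MeasurableSpace Ω} {μ : Measure Ω} {s2 s4 θ : ℝ} {m l q : ℕ}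
  {i : ℤ}

lemma sum_range_eq_add_sum_Icc {M : Type*} [AddCommMonoid M] (f : ℕ → M) {n : ℕ}
    (hn : 0 < n) :
    ∑ j ∈ range n, f j = f 0 + ∑ j ∈ Icc 1 (n - 1), f j := by
  rw [sum_range_eq_add_Ico f hn, Icc_sub_one_right_eq_Ico_of_not_isMin (by simpa using hn.ne')]

/-- `U_{i,l,m,n} = uncenteredU ξ θ m i l - E[uncenteredU ξ θ m i l]`: the terms indexed by
`Sum.inl j` are `θ^j ξ_{i+l-j} ξ_i` for `j < m` (absorbing `ξ_{i+l} ξ_i` as `j = 0`), those indexed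
by `Sum.inr j` are `θ^j ξ_{i+l} ξ_{i-j}` for `1 ≤ j < m`. -/
def uncenteredU (ξ : ℤ → Ω → ℝ) (θ : ℝ) (m : ℕ) (i : ℤ) (l : ℕ) : Ω → ℝ :=
  quadForm ξ ((range m).disjSum (Icc 1 (m - 1))) (Sum.elim (θ ^ ·) (θ ^ ·))
    (Sum.elim (fun j => i + l - j) fun _ => i + l) (Sum.elim (fun _ => i) fun j => i - j)

lemma sum_fourthMixedMoment_inl_inl (hlq : l ≤ q) (hqm : q < m) :
    ∑ j ∈ range m, ∑ k ∈ range m,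
        θ ^ j * θ ^ k * fourthMixedMoment s2 s4 (i + l - j) i (i + q - k) i =
      (s4 - s2 ^ 2) * θ ^ (l + q) +
        s2 ^ 2 * θ ^ (q - l) * ∑ j ∈ range (m - (q - l)), θ ^ (2 * j) := by
  have hterm : ∀ j k : ℕ, θ ^ j * θ ^ k * fourthMixedMoment s2 s4 (i + l - j) i (i + q - k) i =
      (if k = q then if j = l then (s4 - s2 ^ 2) * θ ^ j * θ ^ k else 0 else 0) +
        if k = j + (q - l) then s2 ^ 2 * θ ^ j * θ ^ k else 0 := by
    intro j k
    unfold fourthMixedMoment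
    split_ifs <;> first | (exfalso; omega) | ring
  have hdiag : {j ∈ range m | j + (q - l) < m} = range (m - (q - l)) := by
    ext j; simp only [mem_filter, mem_range]; omega
  simp only [hterm, sum_add_distrib, sum_ite_eq', mem_range, hqm, if_true, ← sum_filter]
  rw [if_pos (by omega), hdiag, mul_sum, pow_add]
  congr 1
  · ring
  · exact sum_congr rfl fun j _ => by ring

lemma sum_fourthMixedMoment_inl_inr (hq : 0 < q) :
    ∑ j ∈ range m, ∑ k ∈ Icc 1 (m - 1),
      θ ^ j * θ ^ k * fourthMixedMoment s2 s4 (i + l - j) i (i + q) (i - k) = 0 := by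
  refine sum_eq_zero fun j _ => sum_eq_zero fun k hk => ?_
  have hk1 := (mem_Icc.1 hk).1
  unfold fourthMixedMoment
  split_ifs <;> first | (exfalso; omega) | rw [mul_zero]

lemma sum_fourthMixedMoment_inr_inl :
    ∑ j ∈ Icc 1 (m - 1), ∑ k ∈ range m,
        θ ^ j * θ ^ k * fourthMixedMoment s2 s4 (i + l) (i - j) (i + q - k) i =
      if l = 0 then s2 ^ 2 * θ ^ q * ∑ j ∈ Icc 1 (m - 1 - q), θ ^ (2 * j) else 0 := by
  have hterm : ∀ j ∈ Icc 1 (m - 1), ∀ k ∈ range m,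
      θ ^ j * θ ^ k * fourthMixedMoment s2 s4 (i + l) (i - j) (i + q - k) i =
        if k = j + q then if l = 0 then s2 ^ 2 * θ ^ j * θ ^ k else 0 else 0 := by
    intro j hj k _
    have hj1 := (mem_Icc.1 hj).1
    unfold fourthMixedMoment
    split_ifs <;> first | (exfalso; omega) | ring
  have hdiag : {j ∈ Icc 1 (m - 1) | j + q < m} = Icc 1 (m - 1 - q) := by
    ext j; simp only [mem_filter, mem_Icc]; omega
  rw [sum_congr rfl fun j hj => sum_congr rfl (hterm j hj)]
  rcases eq_or_ne l 0 with rfl | hl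
  · simp only [if_true, sum_ite_eq', mem_range, ← sum_filter, hdiag, mul_sum]
    exact sum_congr rfl fun j _ => by ring
  · simp [hl]

lemma sum_fourthMixedMoment_inr_inr :
    ∑ j ∈ Icc 1 (m - 1), ∑ k ∈ Icc 1 (m - 1),
        θ ^ j * θ ^ k * fourthMixedMoment s2 s4 (i + l) (i - j) (i + q) (i - k) =
      if l = q then s2 ^ 2 * ∑ j ∈ Icc 1 (m - 1), θ ^ (2 * j) else 0 := by
  have hterm : ∀ j ∈ Icc 1 (m - 1), ∀ k ∈ Icc 1 (m - 1),
      θ ^ j * θ ^ k * fourthMixedMoment s2 s4 (i + l) (i - j) (i + q) (i - k) =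
        if k = j then if l = q then s2 ^ 2 * θ ^ j * θ ^ k else 0 else 0 := by
    intro j hj k hk
    have hj1 := (mem_Icc.1 hj).1
    have hk1 := (mem_Icc.1 hk).1
    unfold fourthMixedMoment
    split_ifs <;> first | (exfalso; omega) | ring
  rw [sum_congr rfl fun j hj => sum_congr rfl (hterm j hj)]
  simp only [sum_ite_eq']
  rcases eq_or_ne l q with rfl | hlq
  · simp only [if_true, mul_sum]
    exact sum_congr rfl fun j hj => by rw [if_pos hj]; ring
  · simp [hlq]

variable [IsProbabilityMeasure μ] {ξ : ℤ → Ω → ℝ}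

lemma integral_uncenteredU (hmeas : ∀ k, Measurable (ξ k)) (hindep : iIndepFun ξ μ)
    (hcenter : ∀ k, μ[ξ k] = 0) (h2 : ∀ k, μ[fun ω => ξ k ω ^ 2] = s2)
    (hmem : ∀ k, MemLp (ξ k) 4 μ) (hlm : l < m) : μ[uncenteredU ξ θ m i l] = θ ^ l * s2 := by
  have hdiag : ∀ j : ℕ, i + l - j = i ↔ j = l := fun j => by omega
  rw [uncenteredU, integral_quadForm hmeas hindep hcenter h2 hmem, sum_disjSum]
  simp only [Sum.elim_inl, Sum.elim_inr, hdiag, mul_ite, mul_zero, sum_ite_eq', mem_range, hlm,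
    if_true, add_eq_left]
  refine sum_eq_zero fun j hj => mul_eq_zero_of_right _ (if_neg ?_)
  have := (mem_Icc.1 hj).1
  omega

lemma covariance_uncenteredU (hmeas : ∀ k, Measurable (ξ k)) (hindep : iIndepFun ξ μ)
    (hcenter : ∀ k, μ[ξ k] = 0) (h2 : ∀ k, μ[fun ω => ξ k ω ^ 2] = s2)
    (h4 : ∀ k, μ[fun ω => ξ k ω ^ 4] = s4) (hmem : ∀ k, MemLp (ξ k) 4 μ) (hlq : l ≤ q)
    (hq : 0 < q) (hqm : q < m) :
    cov[uncenteredU ξ θ m i l, uncenteredU ξ θ m i q; μ] =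
      (s4 - 2 * s2 ^ 2) * θ ^ (l + q) +
        s2 ^ 2 * θ ^ (q - l) * ∑ j ∈ range (m - (q - l)), θ ^ (2 * j) +
        (if l = 0 then s2 ^ 2 * θ ^ q * ∑ j ∈ Icc 1 (m - 1 - q), θ ^ (2 * j) else 0) +
        if l = q then s2 ^ 2 * ∑ j ∈ Icc 1 (m - 1), θ ^ (2 * j) else 0 := by
  have hZ : ∀ r, MemLp (uncenteredU ξ θ m i r) 2 μ := fun r => memLp_quadForm hmem
  rw [covariance_eq_sub (hZ l) (hZ q),
    integral_uncenteredU hmeas hindep hcenter h2 hmem (by omega),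
    integral_uncenteredU hmeas hindep hcenter h2 hmem hqm, uncenteredU, uncenteredU,
    integral_quadForm_mul_quadForm hmeas hindep hcenter h2 h4 hmem]
  simp only [sum_disjSum, Sum.elim_inl, Sum.elim_inr, sum_add_distrib]
  rw [sum_fourthMixedMoment_inl_inl hlq hqm, sum_fourthMixedMoment_inl_inr hq,
    sum_fourthMixedMoment_inr_inl, sum_fourthMixedMoment_inr_inr]
  ring

end LagCovariances

theorem U_equal_index_covariances_general
    {Ω : Type*} [MeasureSpace Ω] [IsProbabilityMeasure (ℙ : Measure Ω)]
    (ξ : ℤ → Ω → ℝ)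
    (hmeas : ∀ k, Measurable (ξ k))
    (hindep : iIndepFun ξ ℙ)
    (hident : ∀ k, IdentDistrib (ξ k) (ξ 0) ℙ ℙ)
    (hcentered : 𝔼[ξ 0] = 0)
    (hL4 : MemLp (ξ 0) 4 ℙ)
    (θ : ℝ)
    (M m : ℕ) (hm : 2 * M < m)
    (U : ℕ → ℕ → Ω → ℝ)
    (hU : ∀ k l ω, U k l ω =
      ∑ j ∈ Finset.Icc 1 (m - 1), θ ^ j * ξ ((k : ℤ) + l - j) ω * ξ (k : ℤ) ω +
      ∑ j ∈ Finset.Icc 1 (m - 1), θ ^ j * ξ ((k : ℤ) + l) ω * ξ ((k : ℤ) - j) ω +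
      ξ ((k : ℤ) + l) ω * ξ (k : ℤ) ω - θ ^ l * 𝔼[fun ω => (ξ 0 ω) ^ 2])
    (i : ℕ) :
    (∀ l q : ℕ, 0 < l → l < q → q ≤ M →
      𝔼[fun ω => U i l ω * U i q ω] =
        θ ^ (l + q) * 𝔼[fun ω => (ξ 0 ω) ^ 4] -
          2 * θ ^ (l + q) * (𝔼[fun ω => (ξ 0 ω) ^ 2]) ^ 2 +
          θ ^ (q - l) * (𝔼[fun ω => (ξ 0 ω) ^ 2]) ^ 2 *
            ∑ j ∈ Finset.range (m - (q - l)), θ ^ (2 * j)) ∧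
    (∀ l q : ℕ, 0 < q → q < l → l ≤ M →
      𝔼[fun ω => U i l ω * U i q ω] =
        θ ^ (l + q) * 𝔼[fun ω => (ξ 0 ω) ^ 4] -
          2 * θ ^ (l + q) * (𝔼[fun ω => (ξ 0 ω) ^ 2]) ^ 2 +
          θ ^ (l - q) * (𝔼[fun ω => (ξ 0 ω) ^ 2]) ^ 2 *
            ∑ p ∈ Finset.range (m - (l - q)), θ ^ (2 * p)) ∧
    (∀ l : ℕ, 0 < l → l ≤ M →
      𝔼[fun ω => (U i l ω) ^ 2] =
        θ ^ (2 * l) * 𝔼[fun ω => (ξ 0 ω) ^ 4] -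
          2 * θ ^ (2 * l) * (𝔼[fun ω => (ξ 0 ω) ^ 2]) ^ 2 +
          (𝔼[fun ω => (ξ 0 ω) ^ 2]) ^ 2 *
            (2 * ∑ j ∈ Finset.Icc 1 (m - 1), θ ^ (2 * j) + 1)) ∧
    (∀ q : ℕ, 0 < q → q ≤ M →
      𝔼[fun ω => U i 0 ω * U i q ω] =
        θ ^ q * 𝔼[fun ω => (ξ 0 ω) ^ 4] -
          θ ^ q * (𝔼[fun ω => (ξ 0 ω) ^ 2]) ^ 2 +
          2 * (𝔼[fun ω => (ξ 0 ω) ^ 2]) ^ 2 * θ ^ q *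
            ∑ j ∈ Finset.Icc 1 (m - 1 - q), θ ^ (2 * j)) := by
  have hcenter : ∀ k, 𝔼[ξ k] = 0 := fun k => (hident k).integral_eq.trans hcentered
  have h2 : ∀ k, 𝔼[fun ω => ξ k ω ^ 2] = 𝔼[fun ω => (ξ 0 ω) ^ 2] := fun k =>
    ((hident k).comp (measurable_id.pow_const 2)).integral_eq
  have h4 : ∀ k, 𝔼[fun ω => ξ k ω ^ 4] = 𝔼[fun ω => (ξ 0 ω) ^ 4] := fun k =>
    ((hident k).comp (measurable_id.pow_const 4)).integral_eq
  have hmem : ∀ k, MemLp (ξ k) 4 ℙ := fun k => (hident k).symm.memLp_snd hL4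
  have hU_sub : ∀ r < m, ∀ ω, U i r ω = uncenteredU ξ θ m i r ω - 𝔼[uncenteredU ξ θ m i r] := by
    intro r hr ω
    rw [hU, integral_uncenteredU hmeas hindep hcenter h2 hmem hr, uncenteredU, quadForm,
      sum_disjSum, sum_range_eq_add_sum_Icc _ (by omega : 0 < m)]
    simp only [Sum.elim_inl, Sum.elim_inr, pow_zero, one_mul, Nat.cast_zero, sub_zero]
    ring
  have hcov : ∀ l q, l < m → q < m → 𝔼[fun ω => U i l ω * U i q ω] =
      cov[uncenteredU ξ θ m i l, uncenteredU ξ θ m i q] := fun l q hl hq => by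
    simp only [hU_sub l hl, hU_sub q hq]
    rfl
  refine ⟨fun l q hl hlq hqM => ?_, fun l q hq hql hlM => ?_, fun l hl hlM => ?_,
    fun q hq hqM => ?_⟩
  · rw [hcov l q (by omega) (by omega), covariance_uncenteredU hmeas hindep hcenter h2 h4 hmem
      hlq.le (by omega) (by omega : q < m), if_neg hl.ne', if_neg hlq.ne]
    ring
  · rw [hcov l q (by omega) (by omega), covariance_comm, covariance_uncenteredU hmeas hindep
      hcenter h2 h4 hmem hql.le (by omega) (by omega : l < m), if_neg hq.ne', if_neg hql.ne]
    ring
  · simp_rw [sq (U i l _)]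
    rw [hcov l l (by omega) (by omega), covariance_uncenteredU hmeas hindep hcenter h2 h4 hmem
      le_rfl hl (by omega : l < m), if_neg hl.ne', if_pos rfl, Nat.sub_self, Nat.sub_zero,
      sum_range_eq_add_sum_Icc _ (by omega)]
    ring
  · rw [hcov 0 q (by omega) (by omega), covariance_uncenteredU hmeas hindep hcenter h2 h4 hmem
      q.zero_le hq (by omega : q < m), if_pos rfl, if_neg hq.ne, Nat.sub_zero,
      sum_range_eq_add_sum_Icc _ (by omega), show m - q - 1 = m - 1 - q by omega]
    ring

theorem U_equal_index_covariances
    {Ω : Type*} [MeasureSpace Ω] [IsProbabilityMeasure (ℙ : Measure Ω)]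
    (ξ : ℤ → Ω → ℝ)
    (hmeas : ∀ k, Measurable (ξ k))
    (hindep : iIndepFun ξ ℙ)
    (hident : ∀ k, IdentDistrib (ξ k) (ξ 0) ℙ ℙ)
    (hcentered : 𝔼[ξ 0] = 0)
    (hL4 : MemLp (ξ 0) 4 ℙ)
    (θ : ℝ) (hθ : θ ∈ Set.Ico (0 : ℝ) 1)
    (M m : ℕ) (hm : 2 * M < m)
    (U : ℕ → ℕ → Ω → ℝ)
    (hU : ∀ k l ω, U k l ω =
      ∑ j ∈ Finset.Icc 1 (m - 1), θ ^ j * ξ ((k : ℤ) + l - j) ω * ξ (k : ℤ) ω +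
      ∑ j ∈ Finset.Icc 1 (m - 1), θ ^ j * ξ ((k : ℤ) + l) ω * ξ ((k : ℤ) - j) ω +
      ξ ((k : ℤ) + l) ω * ξ (k : ℤ) ω - θ ^ l * 𝔼[fun ω => (ξ 0 ω) ^ 2])
    (i : ℕ) (hi : 1 ≤ i) :
    (∀ l q : ℕ, 0 < l → l < q → q ≤ M →
      𝔼[fun ω => U i l ω * U i q ω] =
        θ ^ (l + q) * 𝔼[fun ω => (ξ 0 ω) ^ 4] -
          2 * θ ^ (l + q) * (𝔼[fun ω => (ξ 0 ω) ^ 2]) ^ 2 +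
          θ ^ (q - l) * (𝔼[fun ω => (ξ 0 ω) ^ 2]) ^ 2 *
            ∑ j ∈ Finset.range (m - (q - l)), θ ^ (2 * j)) ∧
    (∀ l q : ℕ, 0 < q → q < l → l ≤ M →
      𝔼[fun ω => U i l ω * U i q ω] =
        θ ^ (l + q) * 𝔼[fun ω => (ξ 0 ω) ^ 4] -
          2 * θ ^ (l + q) * (𝔼[fun ω => (ξ 0 ω) ^ 2]) ^ 2 +
          θ ^ (l - q) * (𝔼[fun ω => (ξ 0 ω) ^ 2]) ^ 2 *
            ∑ p ∈ Finset.range (m - (l - q)), θ ^ (2 * p)) ∧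
    (∀ l : ℕ, 0 < l → l ≤ M →
      𝔼[fun ω => (U i l ω) ^ 2] =
        θ ^ (2 * l) * 𝔼[fun ω => (ξ 0 ω) ^ 4] -
          2 * θ ^ (2 * l) * (𝔼[fun ω => (ξ 0 ω) ^ 2]) ^ 2 +
          (𝔼[fun ω => (ξ 0 ω) ^ 2]) ^ 2 *
            (2 * ∑ j ∈ Finset.Icc 1 (m - 1), θ ^ (2 * j) + 1)) ∧
    (∀ q : ℕ, 0 < q → q ≤ M →
      𝔼[fun ω => U i 0 ω * U i q ω] =
        θ ^ q * 𝔼[fun ω => (ξ 0 ω) ^ 4] -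
          θ ^ q * (𝔼[fun ω => (ξ 0 ω) ^ 2]) ^ 2 +
          2 * (𝔼[fun ω => (ξ 0 ω) ^ 2]) ^ 2 * θ ^ q *
            ∑ j ∈ Finset.Icc 1 (m - 1 - q), θ ^ (2 * j)) :=
  U_equal_index_covariances_general ξ hmeas hindep hident hcentered hL4 θ M m hm U hU i
end
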